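/- arXiv:2101.01829 — 7 statements merged into one kernel-verified Lean document; each statement's English description precedes it below -/
import Mathlib

section
/- An almost disjoint family 𝒜 on ω is almost-normal (i.e. the Ψ-space Ψ(𝒜) is almost-normal) if and only if for every infinite C ⊆ ω there exists a partitioner D for 𝒜 separating ℬ = {A ∈ 𝒜 : A ∩ C is infinite} from 𝒜 \ ℬ, i.e. a set D ⊆ ω such that every A ∈ 𝒜 satisfies A ⊆* D or A ∩ D finite, B ⊆* D for every B ∈ ℬ, and A ∩ D is finite for every A ∈ 𝒜 \ ℬ. -/
open Set

/-- `A ⊆* D`: `A \ D` is finite. -/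
def AlmostSubset (A D : Set ℕ) : Prop := (A \ D).Finite

/-- An almost disjoint family: a family of infinite subsets of `ℕ` any two distinct
members of which have finite intersection. -/
def AlmostDisjointFam (𝒜 : Set (Set ℕ)) : Prop :=
  (∀ A ∈ 𝒜, A.Infinite) ∧ ∀ A ∈ 𝒜, ∀ B ∈ 𝒜, A ≠ B → (A ∩ B).Finite

/-- A maximal almost disjoint (MAD) family. -/
def MADFam (𝒜 : Set (Set ℕ)) : Prop :=
  AlmostDisjointFam 𝒜 ∧ ∀ X : Set ℕ, X.Infinite → ∃ A ∈ 𝒜, (A ∩ X).Infinite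

/-- `D` is a partitioner for the family `𝒜`. -/
def IsPartitioner (𝒜 : Set (Set ℕ)) (D : Set ℕ) : Prop :=
  ∀ A ∈ 𝒜, AlmostSubset A D ∨ (A ∩ D).Finite

/-- The topology of the Ψ-space `Ψ(𝒜)` on the set `ℕ ⊕ ↥𝒜`: points of `ℕ` are isolated
and the sets `{A} ∪ (A \ F)`, `F` finite, form a neighbourhood base at `A ∈ 𝒜`. -/
def psiTop (𝒜 : Set (Set ℕ)) : TopologicalSpace (ℕ ⊕ ↥𝒜) where
  IsOpen U := ∀ A : ↥𝒜, Sum.inr A ∈ U → ((A : Set ℕ) \ {n | Sum.inl n ∈ U}).Finite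
  isOpen_univ := by intro A _; simp
  isOpen_inter := by
    intro U V hU hV A hA
    apply ((hU A hA.1).union (hV A hA.2)).subset
    rintro n ⟨hnA, hn⟩
    by_cases hU' : Sum.inl n ∈ U
    · exact Or.inr ⟨hnA, fun hV' => hn ⟨hU', hV'⟩⟩
    · exact Or.inl ⟨hnA, hU'⟩
  isOpen_sUnion := by
    intro S hS A hA
    obtain ⟨U, hU, hAU⟩ := Set.mem_sUnion.mp hA
    apply (hS U hU A hAU).subset
    rintro n ⟨hnA, hn⟩
    exact ⟨hnA, fun h => hn (Set.mem_sUnion.mpr ⟨U, hU, h⟩)⟩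

/-- A set is regular closed if it is the closure of its interior. -/
def IsRegClosed {X : Type*} [TopologicalSpace X] (K : Set X) : Prop :=
  closure (interior K) = K

/-- A set is π-closed if it is a finite intersection of regular closed sets. -/
def IsPiClosed {X : Type*} [TopologicalSpace X] (K : Set X) : Prop :=
  ∃ (n : ℕ) (f : Fin n → Set X), (∀ i, IsRegClosed (f i)) ∧ K = ⋂ i, f i

/-- A space is almost-normal if any two disjoint closed sets, one of which is regular
closed, can be separated by disjoint open sets. -/
def AlmostNormalSp (X : Type*) [TopologicalSpace X] : Prop :=
  ∀ C K : Set X, IsClosed C → IsClosed K → IsRegClosed K → Disjoint C K →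
    ∃ U V : Set X, IsOpen U ∧ IsOpen V ∧ C ⊆ U ∧ K ⊆ V ∧ Disjoint U V

/-- A space is partly-normal if any two disjoint closed sets, one regular closed and the
other π-closed, can be separated by disjoint open sets. -/
def PartlyNormalSp (X : Type*) [TopologicalSpace X] : Prop :=
  ∀ K₀ K₁ : Set X, IsRegClosed K₀ → IsPiClosed K₁ → Disjoint K₀ K₁ →
    ∃ U V : Set X, IsOpen U ∧ IsOpen V ∧ K₀ ⊆ U ∧ K₁ ⊆ V ∧ Disjoint U V

/-- A space is quasi-normal if any two disjoint π-closed sets can be separated by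
disjoint open sets. -/
def QuasiNormalSp (X : Type*) [TopologicalSpace X] : Prop :=
  ∀ K₀ K₁ : Set X, IsPiClosed K₀ → IsPiClosed K₁ → Disjoint K₀ K₁ →
    ∃ U V : Set X, IsOpen U ∧ IsOpen V ∧ K₀ ⊆ U ∧ K₁ ⊆ V ∧ Disjoint U V

/-- `D^0 = D` and `D^1 = ℕ \ D`. -/
def boolPart (D : Set ℕ) : Bool → Set ℕ
  | false => D
  | true => Dᶜ

/-- Two sets are equal modulo a finite set. -/
def EqModFin (X Y : Set ℕ) : Prop := ((X \ Y) ∪ (Y \ X)).Finite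

/-- A nice family of partitioners for `𝒜`. -/
def NiceFamily (𝒜 𝒟 : Set (Set ℕ)) : Prop :=
  (∀ D ∈ 𝒟, IsPartitioner 𝒜 D) ∧
  ∀ (n : ℕ) (Ds : Fin n → Set ℕ), (∀ i, Ds i ∈ 𝒟) → ∀ f : Fin n → Bool,
    {A | A ∈ 𝒜 ∧ AlmostSubset A (⋂ i, boolPart (Ds i) (f i))}.Finite →
    EqModFin (⋂ i, boolPart (Ds i) (f i))
      (⋃₀ {A | A ∈ 𝒜 ∧ AlmostSubset A (⋂ i, boolPart (Ds i) (f i))})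

/-- `𝒜` is strongly ℵ₀-separated. -/
def StronglyAleph0Separated (𝒜 : Set (Set ℕ)) : Prop :=
  ∀ ℬ 𝒞 : Set (Set ℕ), ℬ ⊆ 𝒜 → 𝒞 ⊆ 𝒜 → ℬ.Countable → 𝒞.Countable → Disjoint ℬ 𝒞 →
    ∃ D : Set ℕ, IsPartitioner 𝒜 D ∧ (∀ B ∈ ℬ, AlmostSubset B D) ∧
      ∀ C ∈ 𝒞, (C ∩ D).Finite

/-- `𝒜` is weakly separated. -/
def WeaklySeparated (𝒜 : Set (Set ℕ)) : Prop :=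
  ∀ ℬ 𝒞 : Set (Set ℕ), ℬ ⊆ 𝒜 → 𝒞 ⊆ 𝒜 → Disjoint ℬ 𝒞 →
    ∃ D : Set ℕ, D.Infinite ∧ (∀ B ∈ ℬ, (D ∩ B).Infinite) ∧ ∀ C ∈ 𝒞, (D ∩ C).Finite

/-- An AD family `𝒜` is almost-normal iff for every infinite `C ⊆ ω` there
is a partitioner `D` for `𝒜` separating `{A ∈ 𝒜 : A ∩ C infinite}` from its complement. -/
theorem statement1 (𝒜 : Set (Set ℕ)) (h𝒜 : AlmostDisjointFam 𝒜) :
    @AlmostNormalSp (ℕ ⊕ ↥𝒜) (psiTop 𝒜) ↔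
      ∀ C : Set ℕ, C.Infinite →
        ∃ D : Set ℕ, IsPartitioner 𝒜 D ∧
          (∀ A ∈ 𝒜, (A ∩ C).Infinite → AlmostSubset A D) ∧
          (∀ A ∈ 𝒜, (A ∩ C).Finite → (A ∩ D).Finite) := by
  classical
  letI : TopologicalSpace (ℕ ⊕ ↥𝒜) := psiTop 𝒜
  have hopen : ∀ U : Set (ℕ ⊕ ↥𝒜), IsOpen U ↔
      ∀ A : ↥𝒜, Sum.inr A ∈ U → ((A : Set ℕ) \ {n | Sum.inl n ∈ U}).Finite :=
    fun U => Iff.rfl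
  -- membership of inr in closure of a set of inl-points
  have hclos : ∀ (S : Set ℕ) (A : ↥𝒜), ((A : Set ℕ) ∩ S).Infinite →
      Sum.inr A ∈ closure (Sum.inl '' S : Set (ℕ ⊕ ↥𝒜)) := by
    intro S A hinf
    rw [mem_closure_iff]
    intro o ho hAo
    have hfin := (hopen o).mp ho A hAo
    have h1 : (((A : Set ℕ) ∩ S) \ {n | Sum.inl n ∈ o}).Finite :=
      hfin.subset (fun n hn => ⟨hn.1.1, hn.2⟩)
    obtain ⟨n, hn1, hn2⟩ := (hinf.diff h1).nonempty
    have hno : Sum.inl n ∈ o := by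
      by_contra hcon
      exact hn2 ⟨hn1, hcon⟩
    exact ⟨Sum.inl n, hno, ⟨n, hn1.2, rfl⟩⟩
  have hinlopen : ∀ S : Set ℕ, IsOpen (Sum.inl '' S : Set (ℕ ⊕ ↥𝒜)) := by
    intro S
    rw [hopen]
    rintro A ⟨n, -, h⟩
    exact absurd h (by simp)
  constructor
  · intro h C hC
    set K : Set (ℕ ⊕ ↥𝒜) :=
      {x | Sum.elim (fun n => n ∈ C) (fun A : ↥𝒜 => ((A : Set ℕ) ∩ C).Infinite) x} with hKdef
    set F : Set (ℕ ⊕ ↥𝒜) :=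
      {x | Sum.elim (fun _ => False) (fun A : ↥𝒜 => ((A : Set ℕ) ∩ C).Finite) x} with hFdef
    have hFclosed : IsClosed F := by
      rw [← isOpen_compl_iff, hopen]
      intro A hA
      have : ((A : Set ℕ) \ {n | Sum.inl n ∈ Fᶜ}) = ∅ := by
        ext n; simp [hFdef]
      rw [this]; exact finite_empty
    have hKclosed : IsClosed K := by
      rw [← isOpen_compl_iff, hopen]
      intro A hA
      have hfin : ¬ ((A : Set ℕ) ∩ C).Infinite := hA
      have : ((A : Set ℕ) \ {n | Sum.inl n ∈ Kᶜ}) = (A : Set ℕ) ∩ C := by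
        ext n; simp [hKdef]
      rw [this]; exact Set.not_infinite.mp hfin
    have hSsub : (Sum.inl '' C : Set (ℕ ⊕ ↥𝒜)) ⊆ K := by
      rintro _ ⟨n, hn, rfl⟩; exact hn
    have hKreg : IsRegClosed K := by
      apply subset_antisymm
      · exact closure_minimal interior_subset hKclosed
      · have h1 : (Sum.inl '' C : Set (ℕ ⊕ ↥𝒜)) ⊆ interior K :=
          interior_maximal hSsub (hinlopen C)
        rintro (n | A) hx
        · exact subset_closure (h1 ⟨n, hx, rfl⟩)
        · exact closure_mono h1 (hclos C A hx)
    have hdisjFK : Disjoint F K := by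
      rw [Set.disjoint_left]
      rintro (n | A) hxF hxK
      · exact hxF
      · exact hxK hxF
    obtain ⟨U, V, hU, hV, hFU, hKV, hUV⟩ := h F K hFclosed hKclosed hKreg hdisjFK
    refine ⟨{n | Sum.inl n ∈ V}, ?_, ?_, ?_⟩
    · intro A hA
      by_cases hc : (A ∩ C).Infinite
      · left
        show (A \ {n | Sum.inl n ∈ V}).Finite
        exact (hopen V).mp hV ⟨A, hA⟩ (hKV hc)
      · right
        have hAF : Sum.inr (⟨A, hA⟩ : ↥𝒜) ∈ F := Set.not_infinite.mp hc
        have h2 := (hopen U).mp hU ⟨A, hA⟩ (hFU hAF)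
        apply h2.subset
        rintro n ⟨hnA, hnD⟩
        exact ⟨hnA, fun hnU => (Set.disjoint_left.mp hUV hnU) hnD⟩
    · intro A hA hinf
      show (A \ {n | Sum.inl n ∈ V}).Finite
      exact (hopen V).mp hV ⟨A, hA⟩ (hKV hinf)
    · intro A hA hfin
      have hAF : Sum.inr (⟨A, hA⟩ : ↥𝒜) ∈ F := hfin
      have h2 := (hopen U).mp hU ⟨A, hA⟩ (hFU hAF)
      apply h2.subset
      rintro n ⟨hnA, hnD⟩
      exact ⟨hnA, fun hnU => (Set.disjoint_left.mp hUV hnU) hnD⟩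
  · intro hsep F K hF hK hKreg hdisj
    set Kn : Set ℕ := {n | Sum.inl n ∈ K} with hKndef
    set Fn : Set ℕ := {n | Sum.inl n ∈ F} with hFndef
    -- closedness facts
    have hFfact : ∀ A : ↥𝒜, Sum.inr A ∉ F → ((A : Set ℕ) ∩ Fn).Finite := by
      intro A hA
      have h1 := (hopen Fᶜ).mp hF.isOpen_compl A hA
      apply h1.subset
      rintro n ⟨hnA, hnF⟩
      exact ⟨hnA, fun (h : Sum.inl n ∈ Fᶜ) => h hnF⟩
    have hKfact : ∀ A : ↥𝒜, Sum.inr A ∉ K → ((A : Set ℕ) ∩ Kn).Finite := by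
      intro A hA
      have h1 := (hopen Kᶜ).mp hK.isOpen_compl A hA
      apply h1.subset
      rintro n ⟨hnA, hnK⟩
      exact ⟨hnA, fun (h : Sum.inl n ∈ Kᶜ) => h hnK⟩
    -- regular closedness: members of K have infinite trace on Kn
    have hra : ∀ A : ↥𝒜, Sum.inr A ∈ K → ((A : Set ℕ) ∩ Kn).Infinite := by
      intro A hAK
      by_contra hfin
      rw [Set.not_infinite] at hfin
      set W : Set (ℕ ⊕ ↥𝒜) := insert (Sum.inr A) (Sum.inl '' Knᶜ) with hWdef
      have hWopen : IsOpen W := by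
        rw [hopen]
        intro B hB
        rcases hB with h | ⟨n, -, h⟩
        · cases h
          apply hfin.subset
          rintro n ⟨hnA, hn⟩
          refine ⟨hnA, by_contra fun hk => hn (Or.inr ⟨n, hk, rfl⟩)⟩
        · exact absurd h (by simp)
      have hAcl : Sum.inr A ∈ closure (interior K) := by
        rw [hKreg]; exact hAK
      rw [mem_closure_iff] at hAcl
      obtain ⟨x, hxW, hxI⟩ := hAcl W hWopen (mem_insert _ _)
      rcases hxW with h | ⟨n, hnk, rfl⟩
      · subst h
        have h1 := (hopen _).mp isOpen_interior A hxI
        have hsub2 : ((A : Set ℕ) \ Kn).Finite :=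
          h1.subset (fun n hn => ⟨hn.1, fun hmem => hn.2 (interior_subset (s := K) hmem)⟩)
        have hAfin : (A : Set ℕ).Finite := by
          apply (hsub2.union hfin).subset
          intro n hn
          by_cases hk : n ∈ Kn
          · exact Or.inr ⟨hn, hk⟩
          · exact Or.inl ⟨hn, hk⟩
        exact (h𝒜.1 A A.2) hAfin
      · exact hnk (interior_subset (s := K) hxI)
    -- obtain the separating partitioner
    obtain ⟨D, h2, h3⟩ : ∃ D : Set ℕ,
        (∀ A ∈ 𝒜, (A ∩ Kn).Infinite → (A \ D).Finite) ∧
        (∀ A ∈ 𝒜, (A ∩ Kn).Finite → (A ∩ D).Finite) := by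
      by_cases hKninf : Kn.Infinite
      · obtain ⟨D, -, hb, hc⟩ := hsep Kn hKninf
        exact ⟨D, fun A hA h => hb A hA h, hc⟩
      · refine ⟨∅, ?_, ?_⟩
        · intro A hA hinf
          exact absurd (Set.not_infinite.mpr
            ((Set.not_infinite.mp hKninf).subset inter_subset_right)) (not_not.mpr hinf)
        · intro A hA _; simp
    -- construct the separating open sets
    refine ⟨{x | Sum.elim (fun n => (n ∉ D ∨ n ∈ Fn) ∧ n ∉ Kn) (fun A => Sum.inr A ∈ F) x},
      {x | Sum.elim (fun n => (n ∈ D ∧ n ∉ Fn) ∨ n ∈ Kn) (fun A => Sum.inr A ∈ K) x},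
      ?_, ?_, ?_, ?_, ?_⟩
    · -- U open
      rw [hopen]
      intro A hAU
      have hAF : Sum.inr A ∈ F := hAU
      have hAnK : Sum.inr A ∉ K := fun h => Set.disjoint_left.mp hdisj hAF h
      have hKfin := hKfact A hAnK
      have hDfin := h3 A A.2 hKfin
      apply (hDfin.union hKfin).subset
      rintro n ⟨hnA, hn⟩
      by_cases hk : n ∈ Kn
      · exact Or.inr ⟨hnA, hk⟩
      · have hnd : ¬(n ∉ D ∨ n ∈ Fn) := fun hd => hn (show _ ∧ _ from ⟨hd, hk⟩)
        exact Or.inl ⟨hnA, not_not.mp (fun hd => hnd (Or.inl hd))⟩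
    · -- V open
      rw [hopen]
      intro A hAV
      have hAK : Sum.inr A ∈ K := hAV
      have hinf := hra A hAK
      have hsubD := h2 A A.2 hinf
      have hAnF : Sum.inr A ∉ F := fun h => Set.disjoint_left.mp hdisj h hAK
      have hFfin := hFfact A hAnF
      apply (hsubD.union hFfin).subset
      rintro n ⟨hnA, hn⟩
      by_cases hd : n ∈ D
      · by_cases hf : n ∈ Fn
        · exact Or.inr ⟨hnA, hf⟩
        · exact absurd (Or.inl ⟨hd, hf⟩) hn
      · exact Or.inl ⟨hnA, hd⟩
    · -- F ⊆ U
      rintro (n | A) hx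
      · exact ⟨Or.inr hx, fun hk => Set.disjoint_left.mp hdisj hx hk⟩
      · exact hx
    · -- K ⊆ V
      rintro (n | A) hx
      · exact Or.inr hx
      · exact hx
    · -- disjoint
      rw [Set.disjoint_left]
      rintro (n | A) hxU hxV
      · rcases hxV with ⟨hd, hf⟩ | hk
        · rcases hxU.1 with h | h
          · exact h hd
          · exact hf h
        · exact hxU.2 hk
      · exact Set.disjoint_left.mp hdisj hxU hxV
end

section
/- Let 𝒜 be a countable almost disjoint family on ω, let C ⊆ ω, and let 𝒟 ⊆ [ω]^ω be a countable nice family of partitioners for 𝒜. Then there exists a partitioner D for 𝒜 such that A ⊆* D for every A ∈ 𝒜 with A ∩ C infinite, A ∩ D is finite for every A ∈ 𝒜 with A ∩ C finite, and 𝒟 ∪ {D} is again a nice family of partitioners for 𝒜. -/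
open Set

namespace Statement3Proof

open Set

attribute [local instance] Classical.propDecidable

@[simp] lemma boolPart_false (D : Set ℕ) : boolPart D false = D := rfl
@[simp] lemma boolPart_true (D : Set ℕ) : boolPart D true = Dᶜ := rfl

lemma helper_fin {S : Set ℕ} {p : Prop} (hp : p → S.Finite) :
    {x | x ∈ S ∧ p}.Finite := by
  by_cases h : p
  · exact (hp h).subset fun x hx => hx.1
  · have he : {x | x ∈ S ∧ p} = ∅ := by ext x; simp [h]
    rw [he]; exact finite_empty

lemma almostSubset_mono {A X Y : Set ℕ} (h : AlmostSubset A X) (hXY : X ⊆ Y) :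
    AlmostSubset A Y :=
  h.subset (diff_subset_diff_right hXY)

lemma mem_boolPart_unique {D : Set ℕ} {b c : Bool} {x : ℕ}
    (hb : x ∈ boolPart D b) (hc : x ∈ boolPart D c) : b = c := by
  cases b <;> cases c <;> simp_all

lemma almostSubset_boolPart {𝒜 : Set (Set ℕ)} {Dp A : Set ℕ} {b : Bool}
    (hP : IsPartitioner 𝒜 Dp) (hA : A ∈ 𝒜)
    (h : (A ∩ boolPart Dp b).Infinite) : AlmostSubset A (boolPart Dp b) := by
  rcases hP A hA with h1 | h2
  · cases b
    · exact h1
    · exfalso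
      rw [boolPart_true, ← Set.diff_eq] at h
      exact h h1
  · cases b
    · exact absurd h2 h
    · rw [boolPart_true]
      unfold AlmostSubset
      rw [Set.diff_compl]
      exact h2

noncomputable def sg (e : ℕ → Set ℕ) (x k : ℕ) : Bool := if x ∈ e k then false else true

def cellX (e : ℕ → Set ℕ) (n : ℕ) (s : ℕ → Bool) : Set ℕ :=
  ⋂ i ∈ Finset.range n, boolPart (e i) (s i)

def famX (𝒜 : Set (Set ℕ)) (e : ℕ → Set ℕ) (n : ℕ) (s : ℕ → Bool) : Set (Set ℕ) :=
  {A | A ∈ 𝒜 ∧ AlmostSubset A (cellX e n s)}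

lemma mem_cellX {e : ℕ → Set ℕ} {n : ℕ} {s : ℕ → Bool} {x : ℕ} :
    x ∈ cellX e n s ↔ ∀ i < n, x ∈ boolPart (e i) (s i) := by
  simp [cellX, Finset.mem_range]

lemma cellX_mono {e : ℕ → Set ℕ} {s : ℕ → Bool} {m n : ℕ} (h : m ≤ n) :
    cellX e n s ⊆ cellX e m s := fun x hx =>
  mem_cellX.mpr fun i hi => mem_cellX.mp hx i (lt_of_lt_of_le hi h)

lemma cellX_subset_boolPart {e : ℕ → Set ℕ} {s : ℕ → Bool} {n i : ℕ} (h : i < n) :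
    cellX e n s ⊆ boolPart (e i) (s i) := fun x hx => mem_cellX.mp hx i h

lemma mem_cellX_sg (e : ℕ → Set ℕ) (x n : ℕ) : x ∈ cellX e n (sg e x) :=
  mem_cellX.mpr fun i _ => by by_cases h : x ∈ e i <;> simp [sg, h]

lemma sg_eq_of_mem {e : ℕ → Set ℕ} {x : ℕ} {b : Bool} {k : ℕ}
    (h : x ∈ boolPart (e k) b) : b = sg e x k :=
  mem_boolPart_unique h (by by_cases h' : x ∈ e k <;> simp [sg, h'])

lemma cellX_congr {e : ℕ → Set ℕ} {n : ℕ} {s t : ℕ → Bool} (h : ∀ i < n, s i = t i) :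
    cellX e n s = cellX e n t := by
  ext x
  simp only [mem_cellX]
  exact ⟨fun hx i hi => h i hi ▸ hx i hi, fun hx i hi => (h i hi).symm ▸ hx i hi⟩

lemma cellX_eq_sg {e : ℕ → Set ℕ} {n : ℕ} {s : ℕ → Bool} {x : ℕ} (hx : x ∈ cellX e n s) :
    cellX e n s = cellX e n (sg e x) :=
  cellX_congr fun i hi => sg_eq_of_mem (mem_cellX.mp hx i hi)

def padB (n : ℕ) (t : Fin n → Bool) : ℕ → Bool := fun i => if h : i < n then t ⟨i, h⟩ else false

lemma cellX_padB (e : ℕ → Set ℕ) (n : ℕ) (s : ℕ → Bool) :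
    cellX e n (padB n (fun j : Fin n => s j.1)) = cellX e n s :=
  cellX_congr fun i hi => by simp [padB, hi]

lemma famX_padB (𝒜 : Set (Set ℕ)) (e : ℕ → Set ℕ) (n : ℕ) (s : ℕ → Bool) :
    famX 𝒜 e n (padB n (fun j : Fin n => s j.1)) = famX 𝒜 e n s := by
  unfold famX; rw [cellX_padB]

lemma iInter_fin_cell (e : ℕ → Set ℕ) (n : ℕ) (s : ℕ → Bool) :
    (⋂ i : Fin n, boolPart (e i.1) (s i.1)) = cellX e n s := by
  ext x
  simp only [mem_iInter, mem_cellX]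
  exact ⟨fun h i hi => h ⟨i, hi⟩, fun h i => h i.1 i.2⟩




variable {𝒜 ℬ 𝒞 : Set (Set ℕ)} {a e : ℕ → Set ℕ}

lemma almost_cell_of_infinite (hePart : ∀ k, IsPartitioner 𝒜 (e k))
    {A : Set ℕ} (hA : A ∈ 𝒜) {n : ℕ} {s : ℕ → Bool}
    (h : (A ∩ cellX e n s).Infinite) : AlmostSubset A (cellX e n s) := by
  have hsub : A \ cellX e n s ⊆ ⋃ i ∈ Finset.range n, (A \ boolPart (e i) (s i)) := by
    rintro x ⟨hxA, hxc⟩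
    rw [mem_cellX] at hxc
    push_neg at hxc
    obtain ⟨i, hi, hxi⟩ := hxc
    exact mem_biUnion (Finset.mem_range.mpr hi) ⟨hxA, hxi⟩
  refine Finite.subset (Finite.biUnion (Finset.range n).finite_toSet fun i hi => ?_) hsub
  exact almostSubset_boolPart (hePart i) hA
    (h.mono (inter_subset_inter_right A (cellX_subset_boolPart (Finset.mem_range.mp hi))))

lemma fam_of_infinite (hePart : ∀ k, IsPartitioner 𝒜 (e k))
    {A : Set ℕ} (hA : A ∈ 𝒜) {n : ℕ} {s : ℕ → Bool}
    (h : (A ∩ cellX e n s).Infinite) : A ∈ famX 𝒜 e n s :=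
  ⟨hA, almost_cell_of_infinite hePart hA h⟩

lemma inter_cell_finite (hePart : ∀ k, IsPartitioner 𝒜 (e k))
    {A : Set ℕ} (hA : A ∈ 𝒜) {n : ℕ} {s : ℕ → Bool}
    (hnot : A ∉ famX 𝒜 e n s) : (A ∩ cellX e n s).Finite := by
  by_contra h
  exact hnot (fam_of_infinite hePart hA h)

lemma almost_tuple {n : ℕ} {Ds : Fin n → Set ℕ} {f : Fin n → Bool}
    (hP : ∀ i, IsPartitioner 𝒜 (Ds i) ∨ boolPart (Ds i) (f i) = univ)
    {A : Set ℕ} (hA : A ∈ 𝒜)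
    (h : (A ∩ ⋂ i, boolPart (Ds i) (f i)).Infinite) :
    AlmostSubset A (⋂ i, boolPart (Ds i) (f i)) := by
  have hsub : A \ ⋂ i, boolPart (Ds i) (f i) ⊆ ⋃ i, (A \ boolPart (Ds i) (f i)) := by
    rintro x ⟨hxA, hxc⟩
    rw [mem_iInter] at hxc
    push_neg at hxc
    obtain ⟨i, hxi⟩ := hxc
    exact mem_iUnion.mpr ⟨i, hxA, hxi⟩
  refine Finite.subset (Set.finite_iUnion fun i => ?_) hsub
  rcases hP i with hp | hu
  · exact almostSubset_boolPart hp hA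
      (h.mono (inter_subset_inter_right A (iInter_subset _ i)))
  · rw [hu]
    show (A \ univ).Finite
    simp

/-! ### The construction -/

def Fse (a : ℕ → Set ℕ) (n : ℕ) : Set ℕ :=
  ⋃ m ∈ Finset.range n, {x | x ∈ a m ∧ a m ≠ a n}

def Gse (e a : ℕ → Set ℕ) (n : ℕ) : Set ℕ :=
  ⋃ t : Fin n → Bool,
    {x | x ∈ a n ∩ cellX e n (padB n t) ∧ (a n ∩ cellX e n (padB n t)).Finite}

def Bse (ℬ : Set (Set ℕ)) (e a : ℕ → Set ℕ) : Set ℕ :=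
  ⋃ n, {x | x ∈ a n \ (Fse a n ∪ Gse e a n) ∧ a n ∈ ℬ}

def LnSet (𝒜 ℬ 𝒞 : Set (Set ℕ)) (e : ℕ → Set ℕ) (n : ℕ) : Set ℕ :=
  {x | (famX 𝒜 e n (sg e x) ∩ ℬ).Infinite ∧ (famX 𝒜 e n (sg e x) ∩ 𝒞).Finite ∧
    x ∉ ⋃₀ (famX 𝒜 e n (sg e x) ∩ 𝒞)}

def KnSet (𝒜 ℬ 𝒞 : Set (Set ℕ)) (e a : ℕ → Set ℕ) (n : ℕ) : Set ℕ :=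
  ⋃ m ∈ Finset.range n, {x | x ∈ a m ∩ LnSet 𝒜 ℬ 𝒞 e n ∧ a m ∈ 𝒞}

def Lse (𝒜 ℬ 𝒞 : Set (Set ℕ)) (e a : ℕ → Set ℕ) : Set ℕ :=
  ⋃ n, (LnSet 𝒜 ℬ 𝒞 e n \ KnSet 𝒜 ℬ 𝒞 e a n)

def Dse (𝒜 ℬ 𝒞 : Set (Set ℕ)) (e a : ℕ → Set ℕ) : Set ℕ :=
  Bse ℬ e a ∪ Lse 𝒜 ℬ 𝒞 e a

/-! ### Finiteness lemmas -/

lemma Gse_finite (e a : ℕ → Set ℕ) (n : ℕ) : (Gse e a n).Finite :=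
  Set.finite_iUnion fun _ => helper_fin id

lemma Fse_self_finite (hAD : ∀ A ∈ 𝒜, ∀ B ∈ 𝒜, A ≠ B → (A ∩ B).Finite)
    (haA : ∀ m, a m ∈ 𝒜) (n : ℕ) : (a n ∩ Fse a n).Finite := by
  have hsub : a n ∩ Fse a n ⊆ ⋃ m ∈ Finset.range n, {x | x ∈ a n ∩ a m ∧ a m ≠ a n} := by
    rintro x ⟨hxn, hxF⟩
    simp only [Fse, mem_iUnion, mem_setOf_eq] at hxF
    obtain ⟨m, hm, hx, hne⟩ := hxF
    exact mem_biUnion hm ⟨⟨hxn, hx⟩, hne⟩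
  refine Finite.subset (Finite.biUnion (Finset.range n).finite_toSet fun m _ => ?_) hsub
  exact helper_fin fun hne => hAD _ (haA n) _ (haA m) (fun h => hne h.symm)

lemma Cln_finite (hePart : ∀ k, IsPartitioner 𝒜 (e k))
    (hCA : 𝒞 ⊆ 𝒜) {A : Set ℕ} (hAC : A ∈ 𝒞) (n : ℕ) :
    (A ∩ LnSet 𝒜 ℬ 𝒞 e n).Finite := by
  have hsub : A ∩ LnSet 𝒜 ℬ 𝒞 e n ⊆ ⋃ t : Fin n → Bool,
      {x | x ∈ A ∩ cellX e n (padB n t) ∧ (A ∩ cellX e n (padB n t)).Finite} := by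
    rintro x ⟨hxA, hBinf, hCfin, hnot⟩
    refine mem_iUnion.mpr ⟨fun j : Fin n => sg e x j.1, ?_⟩
    have hcq := cellX_padB e n (sg e x)
    simp only [mem_setOf_eq, hcq]
    refine ⟨⟨hxA, mem_cellX_sg e x n⟩, ?_⟩
    refine inter_cell_finite hePart (hCA hAC) fun hAf => ?_
    exact hnot ⟨A, ⟨hAf, hAC⟩, hxA⟩
  exact Finite.subset (Set.finite_iUnion fun t => helper_fin id) hsub

lemma KnSet_finite (hePart : ∀ k, IsPartitioner 𝒜 (e k)) (hCA : 𝒞 ⊆ 𝒜)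
    (n : ℕ) : (KnSet 𝒜 ℬ 𝒞 e a n).Finite :=
  Finite.biUnion (Finset.range n).finite_toSet fun m _ =>
    helper_fin fun hmC => Cln_finite hePart hCA hmC n

lemma C_Lse_finite (hePart : ∀ k, IsPartitioner 𝒜 (e k)) (hCA : 𝒞 ⊆ 𝒜)
    (hacov : ∀ A ∈ 𝒜, ∃ m, a m = A) {A : Set ℕ} (hAC : A ∈ 𝒞) :
    (A ∩ Lse 𝒜 ℬ 𝒞 e a).Finite := by
  obtain ⟨m, rfl⟩ := hacov A (hCA hAC)
  have hsub : a m ∩ Lse 𝒜 ℬ 𝒞 e a ⊆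
      ⋃ n ∈ Finset.range (m + 1), (a m ∩ LnSet 𝒜 ℬ 𝒞 e n) := by
    rintro x ⟨hxA, hxL⟩
    obtain ⟨n, hLn, hKn⟩ := mem_iUnion.mp hxL
    by_cases hn : n < m + 1
    · exact mem_biUnion (Finset.mem_range.mpr hn) ⟨hxA, hLn⟩
    · exfalso
      apply hKn
      exact mem_biUnion (Finset.mem_range.mpr (by omega)) ⟨⟨hxA, hLn⟩, hAC⟩
  exact Finite.subset (Finite.biUnion (Finset.range (m + 1)).finite_toSet
    fun n _ => Cln_finite hePart hCA hAC n) hsub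

lemma B_almost (hAD : ∀ A ∈ 𝒜, ∀ B ∈ 𝒜, A ≠ B → (A ∩ B).Finite)
    (haA : ∀ m, a m ∈ 𝒜) (hacov : ∀ A ∈ 𝒜, ∃ m, a m = A) (hBA : ℬ ⊆ 𝒜)
    {A : Set ℕ} (hAB : A ∈ ℬ) : AlmostSubset A (Bse ℬ e a) := by
  obtain ⟨m, rfl⟩ := hacov A (hBA hAB)
  have hsub : a m \ Bse ℬ e a ⊆ (a m ∩ Fse a m) ∪ Gse e a m := by
    rintro x ⟨hxA, hxB⟩
    by_cases hF : x ∈ Fse a m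
    · exact Or.inl ⟨hxA, hF⟩
    by_cases hG : x ∈ Gse e a m
    · exact Or.inr hG
    refine absurd ?_ hxB
    have hm : x ∈ a m \ (Fse a m ∪ Gse e a m) ∧ a m ∈ ℬ := ⟨⟨hxA, fun h => h.elim hF hG⟩, hAB⟩
    exact mem_iUnion.mpr ⟨m, hm⟩
  exact Finite.subset ((Fse_self_finite hAD haA m).union (Gse_finite e a m)) hsub

lemma B_C_finite (hAD : ∀ A ∈ 𝒜, ∀ B ∈ 𝒜, A ≠ B → (A ∩ B).Finite)
    (haA : ∀ m, a m ∈ 𝒜) (hacov : ∀ A ∈ 𝒜, ∃ m, a m = A) (hCA : 𝒞 ⊆ 𝒜)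
    (hBC : ∀ A, A ∈ ℬ → A ∈ 𝒞 → False)
    {A : Set ℕ} (hAC : A ∈ 𝒞) : (A ∩ Bse ℬ e a).Finite := by
  obtain ⟨m, rfl⟩ := hacov A (hCA hAC)
  have hsub : a m ∩ Bse ℬ e a ⊆
      ⋃ n ∈ Finset.range (m + 1), {x | x ∈ a m ∩ a n ∧ a n ∈ ℬ} := by
    rintro x ⟨hxA, hxB⟩
    obtain ⟨n, hx, hnB⟩ := mem_iUnion.mp hxB
    by_cases hn : n < m + 1
    · exact mem_biUnion (Finset.mem_range.mpr hn) ⟨⟨hxA, hx.1⟩, hnB⟩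
    · exfalso
      have hne : a m ≠ a n := fun h => hBC (a m) (h ▸ hnB) hAC
      exact hx.2 (Or.inl (mem_biUnion (Finset.mem_range.mpr (by omega)) ⟨hxA, hne⟩))
  refine Finite.subset (Finite.biUnion (Finset.range (m + 1)).finite_toSet fun n _ => ?_) hsub
  exact helper_fin fun hnB => hAD _ (haA m) _ (haA n)
    (fun h => hBC (a m) (h ▸ hnB) hAC)

/-! ### Separation properties of `Dse` -/

lemma sep_B (hAD : ∀ A ∈ 𝒜, ∀ B ∈ 𝒜, A ≠ B → (A ∩ B).Finite)
    (haA : ∀ m, a m ∈ 𝒜) (hacov : ∀ A ∈ 𝒜, ∃ m, a m = A) (hBA : ℬ ⊆ 𝒜)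
    {A : Set ℕ} (hAB : A ∈ ℬ) : AlmostSubset A (Dse 𝒜 ℬ 𝒞 e a) :=
  almostSubset_mono (B_almost hAD haA hacov hBA hAB) subset_union_left

lemma sep_C (hAD : ∀ A ∈ 𝒜, ∀ B ∈ 𝒜, A ≠ B → (A ∩ B).Finite)
    (hePart : ∀ k, IsPartitioner 𝒜 (e k))
    (haA : ∀ m, a m ∈ 𝒜) (hacov : ∀ A ∈ 𝒜, ∃ m, a m = A) (hCA : 𝒞 ⊆ 𝒜)
    (hBC : ∀ A, A ∈ ℬ → A ∈ 𝒞 → False)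
    {A : Set ℕ} (hAC : A ∈ 𝒞) : (A ∩ Dse 𝒜 ℬ 𝒞 e a).Finite := by
  have : A ∩ Dse 𝒜 ℬ 𝒞 e a = (A ∩ Bse ℬ e a) ∪ (A ∩ Lse 𝒜 ℬ 𝒞 e a) := by
    unfold Dse; rw [inter_union_distrib_left]
  rw [this]
  exact (B_C_finite hAD haA hacov hCA hBC hAC).union (C_Lse_finite hePart hCA hacov hAC)

lemma mem_B_of_almostD (hInf : ∀ A ∈ 𝒜, A.Infinite)
    (hAD : ∀ A ∈ 𝒜, ∀ B ∈ 𝒜, A ≠ B → (A ∩ B).Finite)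
    (hePart : ∀ k, IsPartitioner 𝒜 (e k))
    (haA : ∀ m, a m ∈ 𝒜) (hacov : ∀ A ∈ 𝒜, ∃ m, a m = A)
    (hCA : 𝒞 ⊆ 𝒜) (hcov : 𝒜 ⊆ ℬ ∪ 𝒞) (hBC : ∀ A, A ∈ ℬ → A ∈ 𝒞 → False)
    {A : Set ℕ} (hA : A ∈ 𝒜) (h : AlmostSubset A (Dse 𝒜 ℬ 𝒞 e a)) : A ∈ ℬ := by
  rcases hcov hA with hB | hC
  · exact hB
  · exfalso
    have h2 := sep_C hAD hePart haA hacov hCA hBC hC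
    have : A ⊆ (A \ Dse 𝒜 ℬ 𝒞 e a) ∪ (A ∩ Dse 𝒜 ℬ 𝒞 e a) := by
      intro x hx
      by_cases hxD : x ∈ Dse 𝒜 ℬ 𝒞 e a
      · exact Or.inr ⟨hx, hxD⟩
      · exact Or.inl ⟨hx, hxD⟩
    exact hInf A hA ((h.union h2).subset this)

lemma mem_C_of_interD (hInf : ∀ A ∈ 𝒜, A.Infinite)
    (hAD : ∀ A ∈ 𝒜, ∀ B ∈ 𝒜, A ≠ B → (A ∩ B).Finite)
    (haA : ∀ m, a m ∈ 𝒜) (hacov : ∀ A ∈ 𝒜, ∃ m, a m = A)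
    (hBA : ℬ ⊆ 𝒜) (hcov : 𝒜 ⊆ ℬ ∪ 𝒞)
    {A : Set ℕ} (hA : A ∈ 𝒜) (h : (A ∩ Dse 𝒜 ℬ 𝒞 e a).Finite) : A ∈ 𝒞 := by
  rcases hcov hA with hB | hC
  · exfalso
    have h2 := sep_B (𝒜 := 𝒜) (𝒞 := 𝒞) (e := e) hAD haA hacov hBA hB
    have : A ⊆ (A \ Dse 𝒜 ℬ 𝒞 e a) ∪ (A ∩ Dse 𝒜 ℬ 𝒞 e a) := by
      intro x hx
      by_cases hxD : x ∈ Dse 𝒜 ℬ 𝒞 e a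
      · exact Or.inr ⟨hx, hxD⟩
      · exact Or.inl ⟨hx, hxD⟩
    exact hInf A hA ((h2.union h).subset this)
  · exact hC

/-! ### The main combinatorial lemmas -/

lemma P1 (hInf : ∀ A ∈ 𝒜, A.Infinite)
    (hAD : ∀ A ∈ 𝒜, ∀ B ∈ 𝒜, A ≠ B → (A ∩ B).Finite)
    (hBA : ℬ ⊆ 𝒜) (hCA : 𝒞 ⊆ 𝒜) (hcov : 𝒜 ⊆ ℬ ∪ 𝒞)
    (haA : ∀ m, a m ∈ 𝒜) (hacov : ∀ A ∈ 𝒜, ∃ m, a m = A)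
    (hePart : ∀ k, IsPartitioner 𝒜 (e k))
    (heNice : ∀ (n : ℕ) (s : ℕ → Bool), (famX 𝒜 e n s).Finite →
      EqModFin (cellX e n s) (⋃₀ famX 𝒜 e n s))
    {n : ℕ} {Ds : Fin n → Set ℕ} {f : Fin n → Bool}
    (H : ∀ i, (∃ k, e k = Ds i) ∨ boolPart (Ds i) (f i) = univ)
    (hB : ({A | A ∈ 𝒜 ∧ AlmostSubset A (⋂ i, boolPart (Ds i) (f i))} ∩ ℬ).Finite) :
    (((⋂ i, boolPart (Ds i) (f i)) ∩ Dse 𝒜 ℬ 𝒞 e a) \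
      ⋃₀ ({A | A ∈ 𝒜 ∧ AlmostSubset A (⋂ i, boolPart (Ds i) (f i))} ∩ ℬ)).Finite := by
  classical
  set XX := ⋂ i, boolPart (Ds i) (f i) with hXX
  set 𝒮 := {A | A ∈ 𝒜 ∧ AlmostSubset A XX} ∩ ℬ with h𝒮
  have hP' : ∀ i, IsPartitioner 𝒜 (Ds i) ∨ boolPart (Ds i) (f i) = univ := fun i =>
    (H i).elim (fun ⟨k, hk⟩ => Or.inl (hk ▸ hePart k)) Or.inr
  set Kc : Fin n → ℕ := fun i => if h : ∃ k, e k = Ds i then h.choose else 0 with hKc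
  set N := (Finset.univ.sup Kc) + 1 with hN
  have hNspec : ∀ i, (∃ k, e k = Ds i) → ∃ k, k < N ∧ e k = Ds i := by
    intro i hi
    refine ⟨Kc i, ?_, ?_⟩
    · have := Finset.le_sup (f := Kc) (Finset.mem_univ i)
      omega
    · simp only [hKc, dif_pos hi]
      exact hi.choose_spec
  have claim0 : ∀ x ∈ XX, cellX e N (sg e x) ⊆ XX := by
    intro x hx
    rw [hXX]
    refine subset_iInter fun i => ?_
    rcases H i with hk | hu
    · obtain ⟨k, hkN, hke⟩ := hNspec i hk
      have hx1 : x ∈ boolPart (Ds i) (f i) := mem_iInter.mp hx i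
      have hx2 : f i = sg e x k := sg_eq_of_mem (by rw [hke]; exact hx1)
      calc cellX e N (sg e x) ⊆ boolPart (e k) (sg e x k) := cellX_subset_boolPart hkN
        _ = boolPart (Ds i) (f i) := by rw [hke, ← hx2]
    · rw [hu]; exact subset_univ _
  have claim1 : ∀ x ∈ XX, ∀ m, N ≤ m →
      famX 𝒜 e m (sg e x) ⊆ {A | A ∈ 𝒜 ∧ AlmostSubset A XX} := by
    rintro x hx m hm A ⟨hA, hAs⟩
    exact ⟨hA, almostSubset_mono hAs ((cellX_mono hm).trans (claim0 x hx))⟩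
  set E1 : Set ℕ := ⋃ m ∈ Finset.range N, {y | y ∈ a m ∩ XX ∧ (a m ∩ XX).Finite} with hE1
  set E2 : Set ℕ := ⋃ t : Fin N → Bool,
    {y | y ∈ cellX e N (padB N t) \ ⋃₀ famX 𝒜 e N (padB N t) ∧
      (famX 𝒜 e N (padB N t)).Finite} with hE2
  set E3 : Set ℕ := ⋃ t : Fin N → Bool,
    {y | y ∈ (⋃ A ∈ famX 𝒜 e N (padB N t) ∩ 𝒞, (A ∩ Lse 𝒜 ℬ 𝒞 e a)) ∧
      (famX 𝒜 e N (padB N t)).Finite} with hE3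
  have hE1fin : E1.Finite :=
    Finite.biUnion (Finset.range N).finite_toSet fun m _ => helper_fin id
  have hE2fin : E2.Finite := Set.finite_iUnion fun t =>
    helper_fin fun hf => ((heNice N (padB N t) hf).subset subset_union_left)
  have hE3fin : E3.Finite := Set.finite_iUnion fun t =>
    helper_fin fun hf => Finite.biUnion (hf.inter_of_left 𝒞)
      fun A hA => C_Lse_finite hePart hCA hacov hA.2
  refine Finite.subset (hE1fin.union (hE2fin.union hE3fin)) ?_
  rintro x ⟨⟨hxXX, hxD⟩, hxnot⟩
  rcases hxD with hxB | hxL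
  · -- Bse case
    simp only [Bse, mem_iUnion, mem_setOf_eq] at hxB
    obtain ⟨m, ⟨hxam, hxFG⟩, hmB⟩ := hxB
    by_cases hm : m < N
    · left
      refine mem_biUnion (Finset.mem_range.mpr hm) ⟨⟨hxam, hxXX⟩, ?_⟩
      by_contra hfin
      have hfam : AlmostSubset (a m) XX := almost_tuple hP' (haA m) hfin
      exact hxnot ⟨a m, ⟨⟨haA m, hfam⟩, hmB⟩, hxam⟩
    · push_neg at hm
      exfalso
      have hxc : x ∈ cellX e m (sg e x) := mem_cellX_sg e x m
      have hfin' : ¬ (a m ∩ cellX e m (sg e x)).Finite := by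
        intro hfin
        apply hxFG
        right
        refine mem_iUnion.mpr ⟨fun j : Fin m => sg e x j.1, ?_⟩
        have hcq := cellX_padB e m (sg e x)
        simp only [mem_setOf_eq, hcq]
        exact ⟨⟨hxam, hxc⟩, hfin⟩
      have hfam : a m ∈ famX 𝒜 e m (sg e x) :=
        fam_of_infinite hePart (haA m) hfin'
      exact hxnot ⟨a m, ⟨claim1 x hxXX m hm hfam, hmB⟩, hxam⟩
  · -- Lse case
    simp only [Lse, mem_iUnion] at hxL
    obtain ⟨nl, hLn, hKn⟩ := hxL
    obtain ⟨hBinf, hCfin, hnotC⟩ := hLn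
    by_cases hnl : N ≤ nl
    · exfalso
      have hsub : famX 𝒜 e nl (sg e x) ∩ ℬ ⊆ 𝒮 := fun A hA =>
        ⟨claim1 x hxXX nl hnl hA.1, hA.2⟩
      exact hBinf (hB.subset hsub)
    · push_neg at hnl
      have hxLse : x ∈ Lse 𝒜 ℬ 𝒞 e a := by
        simp only [Lse, mem_iUnion]
        exact ⟨nl, ⟨hBinf, hCfin, hnotC⟩, hKn⟩
      have hfinN : (famX 𝒜 e N (sg e x)).Finite := by
        have h1 : famX 𝒜 e N (sg e x) ∩ ℬ ⊆ 𝒮 := fun A hA =>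
          ⟨claim1 x hxXX N le_rfl hA.1, hA.2⟩
        have h2 : famX 𝒜 e N (sg e x) ∩ 𝒞 ⊆ famX 𝒜 e nl (sg e x) ∩ 𝒞 := by
          rintro A ⟨⟨hA1, hA2⟩, hA3⟩
          exact ⟨⟨hA1, almostSubset_mono hA2 (cellX_mono hnl.le)⟩, hA3⟩
        have h3 : famX 𝒜 e N (sg e x) ⊆
            (famX 𝒜 e N (sg e x) ∩ ℬ) ∪ (famX 𝒜 e N (sg e x) ∩ 𝒞) := by
          intro A hA
          rcases hcov hA.1 with h | h
          exacts [Or.inl ⟨hA, h⟩, Or.inr ⟨hA, h⟩]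
        exact Finite.subset (Finite.union (hB.subset h1) (hCfin.subset h2)) h3
      have hxcell : x ∈ cellX e N (sg e x) := mem_cellX_sg e x N
      by_cases hxU : x ∈ ⋃₀ famX 𝒜 e N (sg e x)
      · obtain ⟨A, hAf, hxA⟩ := hxU
        rcases hcov hAf.1 with hAB | hAC
        · exact absurd ⟨A, ⟨claim1 x hxXX N le_rfl hAf, hAB⟩, hxA⟩ hxnot
        · right; right
          refine mem_iUnion.mpr ⟨fun j : Fin N => sg e x j.1, ?_⟩
          have hfq := famX_padB 𝒜 e N (sg e x)
          simp only [mem_setOf_eq, hfq]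
          exact ⟨mem_biUnion ⟨hAf, hAC⟩ ⟨hxA, hxLse⟩, hfinN⟩
      · right; left
        refine mem_iUnion.mpr ⟨fun j : Fin N => sg e x j.1, ?_⟩
        have hcq := cellX_padB e N (sg e x)
        have hfq := famX_padB 𝒜 e N (sg e x)
        simp only [mem_setOf_eq, hcq, hfq]
        exact ⟨⟨hxcell, hxU⟩, hfinN⟩

lemma P2 (hInf : ∀ A ∈ 𝒜, A.Infinite)
    (hAD : ∀ A ∈ 𝒜, ∀ B ∈ 𝒜, A ≠ B → (A ∩ B).Finite)
    (hBA : ℬ ⊆ 𝒜) (hCA : 𝒞 ⊆ 𝒜) (hcov : 𝒜 ⊆ ℬ ∪ 𝒞)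
    (haA : ∀ m, a m ∈ 𝒜) (hacov : ∀ A ∈ 𝒜, ∃ m, a m = A)
    (hePart : ∀ k, IsPartitioner 𝒜 (e k))
    (heNice : ∀ (n : ℕ) (s : ℕ → Bool), (famX 𝒜 e n s).Finite →
      EqModFin (cellX e n s) (⋃₀ famX 𝒜 e n s))
    {n : ℕ} {Ds : Fin n → Set ℕ} {f : Fin n → Bool}
    (H : ∀ i, (∃ k, e k = Ds i) ∨ boolPart (Ds i) (f i) = univ)
    (hC : ({A | A ∈ 𝒜 ∧ AlmostSubset A (⋂ i, boolPart (Ds i) (f i))} ∩ 𝒞).Finite) :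
    (((⋂ i, boolPart (Ds i) (f i)) ∩ (Dse 𝒜 ℬ 𝒞 e a)ᶜ) \
      ⋃₀ ({A | A ∈ 𝒜 ∧ AlmostSubset A (⋂ i, boolPart (Ds i) (f i))} ∩ 𝒞)).Finite := by
  classical
  set XX := ⋂ i, boolPart (Ds i) (f i) with hXX
  set 𝒮 := {A | A ∈ 𝒜 ∧ AlmostSubset A XX} ∩ 𝒞 with h𝒮
  set Kc : Fin n → ℕ := fun i => if h : ∃ k, e k = Ds i then h.choose else 0 with hKc
  set N := (Finset.univ.sup Kc) + 1 with hN
  have hNspec : ∀ i, (∃ k, e k = Ds i) → ∃ k, k < N ∧ e k = Ds i := by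
    intro i hi
    refine ⟨Kc i, ?_, ?_⟩
    · have := Finset.le_sup (f := Kc) (Finset.mem_univ i)
      omega
    · simp only [hKc, dif_pos hi]
      exact hi.choose_spec
  have claim0 : ∀ x ∈ XX, cellX e N (sg e x) ⊆ XX := by
    intro x hx
    rw [hXX]
    refine subset_iInter fun i => ?_
    rcases H i with hk | hu
    · obtain ⟨k, hkN, hke⟩ := hNspec i hk
      have hx1 : x ∈ boolPart (Ds i) (f i) := mem_iInter.mp hx i
      have hx2 : f i = sg e x k := sg_eq_of_mem (by rw [hke]; exact hx1)
      calc cellX e N (sg e x) ⊆ boolPart (e k) (sg e x k) := cellX_subset_boolPart hkN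
        _ = boolPart (Ds i) (f i) := by rw [hke, ← hx2]
    · rw [hu]; exact subset_univ _
  have claim1 : ∀ x ∈ XX,
      famX 𝒜 e N (sg e x) ⊆ {A | A ∈ 𝒜 ∧ AlmostSubset A XX} := by
    rintro x hx A ⟨hA, hAs⟩
    exact ⟨hA, almostSubset_mono hAs (claim0 x hx)⟩
  set E2 : Set ℕ := ⋃ t : Fin N → Bool,
    {y | y ∈ cellX e N (padB N t) \ ⋃₀ famX 𝒜 e N (padB N t) ∧
      (famX 𝒜 e N (padB N t)).Finite} with hE2
  set E4 : Set ℕ := ⋃ t : Fin N → Bool,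
    {y | y ∈ (⋃ A ∈ famX 𝒜 e N (padB N t) ∩ ℬ, (A \ Dse 𝒜 ℬ 𝒞 e a)) ∧
      (famX 𝒜 e N (padB N t)).Finite} with hE4
  have hE2fin : E2.Finite := Set.finite_iUnion fun t =>
    helper_fin fun hf => ((heNice N (padB N t) hf).subset subset_union_left)
  have hE4fin : E4.Finite := Set.finite_iUnion fun t =>
    helper_fin fun hf => Finite.biUnion (hf.inter_of_left ℬ)
      fun A hA => sep_B hAD haA hacov hBA hA.2
  have hE5fin : (KnSet 𝒜 ℬ 𝒞 e a N).Finite := KnSet_finite hePart hCA N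
  refine Finite.subset (hE2fin.union (hE4fin.union hE5fin)) ?_
  rintro x ⟨⟨hxXX, hxD⟩, hxnot⟩
  have hxD' : x ∉ Dse 𝒜 ℬ 𝒞 e a := hxD
  have hCsub : famX 𝒜 e N (sg e x) ∩ 𝒞 ⊆ 𝒮 := fun A hA =>
    ⟨claim1 x hxXX hA.1, hA.2⟩
  have hxcell : x ∈ cellX e N (sg e x) := mem_cellX_sg e x N
  by_cases hBf : (famX 𝒜 e N (sg e x) ∩ ℬ).Finite
  · have hfinN : (famX 𝒜 e N (sg e x)).Finite := by
      have h3 : famX 𝒜 e N (sg e x) ⊆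
          (famX 𝒜 e N (sg e x) ∩ ℬ) ∪ (famX 𝒜 e N (sg e x) ∩ 𝒞) := by
        intro A hA
        rcases hcov hA.1 with h | h
        exacts [Or.inl ⟨hA, h⟩, Or.inr ⟨hA, h⟩]
      exact Finite.subset (Finite.union hBf (hC.subset hCsub)) h3
    by_cases hxU : x ∈ ⋃₀ famX 𝒜 e N (sg e x)
    · obtain ⟨A, hAf, hxA⟩ := hxU
      rcases hcov hAf.1 with hAB | hAC
      · right; left
        refine mem_iUnion.mpr ⟨fun j : Fin N => sg e x j.1, ?_⟩
        have hfq := famX_padB 𝒜 e N (sg e x)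
        simp only [mem_setOf_eq, hfq]
        exact ⟨mem_biUnion ⟨hAf, hAB⟩ ⟨hxA, hxD'⟩, hfinN⟩
      · exact absurd ⟨A, ⟨claim1 x hxXX hAf, hAC⟩, hxA⟩ hxnot
    · left
      refine mem_iUnion.mpr ⟨fun j : Fin N => sg e x j.1, ?_⟩
      have hcq := cellX_padB e N (sg e x)
      have hfq := famX_padB 𝒜 e N (sg e x)
      simp only [mem_setOf_eq, hcq, hfq]
      exact ⟨⟨hxcell, hxU⟩, hfinN⟩
  · -- ℬ-part infinite: x is in LnSet N, hence (since x ∉ Lse) in KnSet N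
    right; right
    have hxLn : x ∈ LnSet 𝒜 ℬ 𝒞 e N := by
      refine ⟨hBf, hC.subset hCsub, ?_⟩
      rintro ⟨A, hA, hxA⟩
      exact hxnot ⟨A, hCsub hA, hxA⟩
    by_contra hxK
    apply hxD'
    right
    simp only [Lse, mem_iUnion]
    exact ⟨N, hxLn, hxK⟩
lemma nice_inter (hInf : ∀ A ∈ 𝒜, A.Infinite)
    (hAD : ∀ A ∈ 𝒜, ∀ B ∈ 𝒜, A ≠ B → (A ∩ B).Finite)
    (hBA : ℬ ⊆ 𝒜) (hCA : 𝒞 ⊆ 𝒜) (hcov : 𝒜 ⊆ ℬ ∪ 𝒞)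
    (hBC : ∀ A, A ∈ ℬ → A ∈ 𝒞 → False)
    (haA : ∀ m, a m ∈ 𝒜) (hacov : ∀ A ∈ 𝒜, ∃ m, a m = A)
    (hePart : ∀ k, IsPartitioner 𝒜 (e k))
    (heNice : ∀ (n : ℕ) (s : ℕ → Bool), (famX 𝒜 e n s).Finite →
      EqModFin (cellX e n s) (⋃₀ famX 𝒜 e n s))
    {n : ℕ} {Ds : Fin n → Set ℕ} {f : Fin n → Bool}
    (H : ∀ i, (∃ k, e k = Ds i) ∨ boolPart (Ds i) (f i) = univ)
    (hfin : {A | A ∈ 𝒜 ∧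
      AlmostSubset A ((⋂ i, boolPart (Ds i) (f i)) ∩ Dse 𝒜 ℬ 𝒞 e a)}.Finite) :
    EqModFin ((⋂ i, boolPart (Ds i) (f i)) ∩ Dse 𝒜 ℬ 𝒞 e a)
      (⋃₀ {A | A ∈ 𝒜 ∧
        AlmostSubset A ((⋂ i, boolPart (Ds i) (f i)) ∩ Dse 𝒜 ℬ 𝒞 e a)}) := by
  set XX := ⋂ i, boolPart (Ds i) (f i) with hXX
  have hSeq : {A | A ∈ 𝒜 ∧ AlmostSubset A (XX ∩ Dse 𝒜 ℬ 𝒞 e a)} =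
      {A | A ∈ 𝒜 ∧ AlmostSubset A XX} ∩ ℬ := by
    ext A
    constructor
    · rintro ⟨hA, hAs⟩
      have h1 : AlmostSubset A XX := almostSubset_mono hAs inter_subset_left
      have h2 : AlmostSubset A (Dse 𝒜 ℬ 𝒞 e a) := almostSubset_mono hAs inter_subset_right
      exact ⟨⟨hA, h1⟩, mem_B_of_almostD hInf hAD hePart haA hacov hCA hcov hBC hA h2⟩
    · rintro ⟨⟨hA, h1⟩, hAB⟩
      refine ⟨hA, ?_⟩
      have h2 := sep_B (𝒜 := 𝒜) (𝒞 := 𝒞) (e := e) hAD haA hacov hBA hAB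
      refine (h1.union h2).subset ?_
      rintro x ⟨hxA, hx⟩
      by_cases hxX : x ∈ XX
      · exact Or.inr ⟨hxA, fun hxD => hx ⟨hxX, hxD⟩⟩
      · exact Or.inl ⟨hxA, hxX⟩
  have hmem : ∀ A ∈ {A | A ∈ 𝒜 ∧ AlmostSubset A (XX ∩ Dse 𝒜 ℬ 𝒞 e a)},
      AlmostSubset A (XX ∩ Dse 𝒜 ℬ 𝒞 e a) := fun A hA => hA.2
  unfold EqModFin
  refine Finite.union ?_ ?_
  · rw [hSeq] at hfin ⊢
    exact P1 hInf hAD hBA hCA hcov haA hacov hePart heNice H hfin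
  · refine Finite.subset (hfin.biUnion fun A hA => hmem A hA) ?_
    rintro x ⟨⟨A, hA, hxA⟩, hxT⟩
    exact mem_biUnion hA ⟨hxA, hxT⟩

lemma nice_diff (hInf : ∀ A ∈ 𝒜, A.Infinite)
    (hAD : ∀ A ∈ 𝒜, ∀ B ∈ 𝒜, A ≠ B → (A ∩ B).Finite)
    (hBA : ℬ ⊆ 𝒜) (hCA : 𝒞 ⊆ 𝒜) (hcov : 𝒜 ⊆ ℬ ∪ 𝒞)
    (hBC : ∀ A, A ∈ ℬ → A ∈ 𝒞 → False)
    (haA : ∀ m, a m ∈ 𝒜) (hacov : ∀ A ∈ 𝒜, ∃ m, a m = A)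
    (hePart : ∀ k, IsPartitioner 𝒜 (e k))
    (heNice : ∀ (n : ℕ) (s : ℕ → Bool), (famX 𝒜 e n s).Finite →
      EqModFin (cellX e n s) (⋃₀ famX 𝒜 e n s))
    {n : ℕ} {Ds : Fin n → Set ℕ} {f : Fin n → Bool}
    (H : ∀ i, (∃ k, e k = Ds i) ∨ boolPart (Ds i) (f i) = univ)
    (hfin : {A | A ∈ 𝒜 ∧
      AlmostSubset A ((⋂ i, boolPart (Ds i) (f i)) ∩ (Dse 𝒜 ℬ 𝒞 e a)ᶜ)}.Finite) :
    EqModFin ((⋂ i, boolPart (Ds i) (f i)) ∩ (Dse 𝒜 ℬ 𝒞 e a)ᶜ)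
      (⋃₀ {A | A ∈ 𝒜 ∧
        AlmostSubset A ((⋂ i, boolPart (Ds i) (f i)) ∩ (Dse 𝒜 ℬ 𝒞 e a)ᶜ)}) := by
  set XX := ⋂ i, boolPart (Ds i) (f i) with hXX
  have hSeq : {A | A ∈ 𝒜 ∧ AlmostSubset A (XX ∩ (Dse 𝒜 ℬ 𝒞 e a)ᶜ)} =
      {A | A ∈ 𝒜 ∧ AlmostSubset A XX} ∩ 𝒞 := by
    ext A
    constructor
    · rintro ⟨hA, hAs⟩
      have h1 : AlmostSubset A XX := almostSubset_mono hAs inter_subset_left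
      have h2 : AlmostSubset A (Dse 𝒜 ℬ 𝒞 e a)ᶜ := almostSubset_mono hAs inter_subset_right
      have h3 : (A ∩ Dse 𝒜 ℬ 𝒞 e a).Finite := by
        have : A \ (Dse 𝒜 ℬ 𝒞 e a)ᶜ = A ∩ Dse 𝒜 ℬ 𝒞 e a := Set.diff_compl
        rw [← this]
        exact h2
      exact ⟨⟨hA, h1⟩, mem_C_of_interD hInf hAD haA hacov hBA hcov hA h3⟩
    · rintro ⟨⟨hA, h1⟩, hAC⟩
      refine ⟨hA, ?_⟩
      have h2 := sep_C (ℬ := ℬ) hAD hePart haA hacov hCA hBC hAC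
      refine (h1.union h2).subset ?_
      rintro x ⟨hxA, hx⟩
      by_cases hxX : x ∈ XX
      · have hxD : x ∈ Dse 𝒜 ℬ 𝒞 e a := by
          by_contra hxD
          exact hx ⟨hxX, hxD⟩
        exact Or.inr ⟨hxA, hxD⟩
      · exact Or.inl ⟨hxA, hxX⟩
  have hmem : ∀ A ∈ {A | A ∈ 𝒜 ∧ AlmostSubset A (XX ∩ (Dse 𝒜 ℬ 𝒞 e a)ᶜ)},
      AlmostSubset A (XX ∩ (Dse 𝒜 ℬ 𝒞 e a)ᶜ) := fun A hA => hA.2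
  unfold EqModFin
  refine Finite.union ?_ ?_
  · rw [hSeq] at hfin ⊢
    exact P2 hInf hAD hBA hCA hcov haA hacov hePart heNice H hfin
  · refine Finite.subset (hfin.biUnion fun A hA => hmem A hA) ?_
    rintro x ⟨⟨A, hA, hxA⟩, hxT⟩
    exact mem_biUnion hA ⟨hxA, hxT⟩
lemma exists_e (𝒜 𝒟 : Set (Set ℕ)) (hInf : ∀ A ∈ 𝒜, A.Infinite)
    (h𝒟c : 𝒟.Countable) (hnice : NiceFamily 𝒜 𝒟) :
    ∃ e : ℕ → Set ℕ, (∀ k, IsPartitioner 𝒜 (e k)) ∧ (∀ D' ∈ 𝒟, ∃ k, e k = D') ∧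
      (∀ (n : ℕ) (s : ℕ → Bool), (famX 𝒜 e n s).Finite →
        EqModFin (cellX e n s) (⋃₀ famX 𝒜 e n s)) := by
  rcases Set.eq_empty_or_nonempty 𝒟 with hD | hD
  · refine ⟨fun _ => univ, ?_, ?_, ?_⟩
    · intro _ A _
      left
      show (A \ univ).Finite
      simp
    · intro D' hD'
      rw [hD] at hD'
      exact absurd hD' (notMem_empty _)
    · intro n s hf
      by_cases hs : ∀ i < n, s i = false
      · have hcell : cellX (fun _ => univ) n s = univ := by
          apply eq_univ_of_forall
          intro x
          rw [mem_cellX]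
          intro i hi
          rw [hs i hi]
          exact mem_univ x
        have hfam : famX 𝒜 (fun _ => univ) n s = {A | A ∈ 𝒜 ∧ AlmostSubset A univ} := by
          unfold famX
          rw [hcell]
        have huniv : (⋂ i : Fin 0, boolPart (Fin.elim0 i) (Fin.elim0 i)) = univ :=
          iInter_of_empty _
        have h0 := hnice.2 0 Fin.elim0 (fun i => i.elim0) Fin.elim0 ?_
        · rw [huniv] at h0
          rw [hcell, hfam]
          exact h0
        · rw [huniv]
          rw [hfam] at hf
          exact hf
      · push_neg at hs
        obtain ⟨i0, hi0, hsi⟩ := hs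
        have hcell : cellX (fun _ => univ) n s = ∅ := by
          apply eq_empty_iff_forall_notMem.mpr
          intro x hx
          have h1 := mem_cellX.mp hx i0 hi0
          have hsi' : s i0 = true := by cases h : s i0 <;> simp_all
          rw [hsi', boolPart_true, compl_univ] at h1
          exact h1
        have hfam : famX 𝒜 (fun _ => univ) n s = ∅ := by
          apply eq_empty_iff_forall_notMem.mpr
          rintro A ⟨hA, hAs⟩
          unfold AlmostSubset at hAs
          rw [hcell, diff_empty] at hAs
          exact hInf A hA hAs
        rw [hcell, hfam]
        unfold EqModFin
        simp
  · obtain ⟨e, he⟩ := h𝒟c.exists_eq_range hD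
    refine ⟨e, ?_, ?_, ?_⟩
    · intro k
      exact hnice.1 (e k) (by rw [he]; exact mem_range_self k)
    · intro D' hD'
      rw [he] at hD'
      exact hD'
    · intro n s hf
      have hIc : (⋂ i : Fin n, boolPart ((fun i : Fin n => e i.1) i) ((fun i : Fin n => s i.1) i))
          = cellX e n s := iInter_fin_cell e n s
      have h0 := hnice.2 n (fun i : Fin n => e i.1)
        (fun i => by rw [he]; exact mem_range_self i.1) (fun i : Fin n => s i.1) ?_
      · rw [hIc] at h0
        exact h0
      · rw [hIc]
        exact hf
end Statement3Proof

open Statement3Proof in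
/-- Given a countable AD family `𝒜`, a set `C ⊆ ω` and a countable nice
family `𝒟 ⊆ [ω]^ω` of partitioners for `𝒜`, there is a partitioner `D` separating
`{A ∈ 𝒜 : A ∩ C infinite}` from its complement such that `𝒟 ∪ {D}` is again a nice
family of partitioners for `𝒜`. -/
theorem statement3 (𝒜 : Set (Set ℕ)) (h𝒜 : AlmostDisjointFam 𝒜) (hc : 𝒜.Countable)
    (C : Set ℕ) (𝒟 : Set (Set ℕ)) (h𝒟c : 𝒟.Countable) (h𝒟inf : ∀ D ∈ 𝒟, D.Infinite)
    (hnice : NiceFamily 𝒜 𝒟) :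
    ∃ D : Set ℕ, IsPartitioner 𝒜 D ∧
      (∀ A ∈ 𝒜, (A ∩ C).Infinite → AlmostSubset A D) ∧
      (∀ A ∈ 𝒜, (A ∩ C).Finite → (A ∩ D).Finite) ∧
      NiceFamily 𝒜 (insert D 𝒟) := by
  classical
  obtain ⟨hInf, hAD⟩ := h𝒜
  -- 𝒜 is nonempty (from the nice family condition with the empty tuple)
  have h𝒜ne : 𝒜.Nonempty := by
    rcases Set.eq_empty_or_nonempty 𝒜 with hA | hA
    · exfalso
      have h0 := hnice.2 0 Fin.elim0 (fun i => i.elim0) Fin.elim0 ?_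
      · have huniv : (⋂ i : Fin 0, boolPart (Fin.elim0 i) (Fin.elim0 i)) = univ :=
          iInter_of_empty _
        rw [huniv] at h0
        have hSe : {A | A ∈ 𝒜 ∧ AlmostSubset A (univ : Set ℕ)} = ∅ := by
          rw [hA]; ext A; simp
        rw [hSe] at h0
        unfold EqModFin at h0
        simp only [sUnion_empty, diff_empty, empty_diff, union_empty] at h0
        exact Set.infinite_univ h0
      · have hSe : {A | A ∈ 𝒜 ∧ AlmostSubset A
            (⋂ i : Fin 0, boolPart (Fin.elim0 i) (Fin.elim0 i))} = ∅ := by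
          rw [hA]; ext A; simp
        rw [hSe]
        exact finite_empty
    · exact hA
  obtain ⟨a, ha⟩ := hc.exists_eq_range h𝒜ne
  have haA : ∀ m, a m ∈ 𝒜 := fun m => by rw [ha]; exact mem_range_self m
  have hacov : ∀ A ∈ 𝒜, ∃ m, a m = A := fun A hA => by rw [ha] at hA; exact hA
  obtain ⟨e, hePart, heCov, heNice⟩ := exists_e 𝒜 𝒟 hInf h𝒟c hnice
  set ℬ : Set (Set ℕ) := {A | A ∈ 𝒜 ∧ (A ∩ C).Infinite} with hℬ
  set 𝒞 : Set (Set ℕ) := {A | A ∈ 𝒜 ∧ (A ∩ C).Finite} with h𝒞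
  have hBA : ℬ ⊆ 𝒜 := fun A hA => hA.1
  have hCA : 𝒞 ⊆ 𝒜 := fun A hA => hA.1
  have hcov : 𝒜 ⊆ ℬ ∪ 𝒞 := fun A hA =>
    (em (A ∩ C).Finite).elim (fun h => Or.inr ⟨hA, h⟩) (fun h => Or.inl ⟨hA, h⟩)
  have hBC : ∀ A, A ∈ ℬ → A ∈ 𝒞 → False := fun A h1 h2 => h1.2 h2.2
  have hPart : IsPartitioner 𝒜 (Dse 𝒜 ℬ 𝒞 e a) := by
    intro A hA
    rcases hcov hA with hB | hC
    · exact Or.inl (sep_B hAD haA hacov hBA hB)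
    · exact Or.inr (sep_C hAD hePart haA hacov hCA hBC hC)
  refine ⟨Dse 𝒜 ℬ 𝒞 e a, hPart, ?_, ?_, ?_⟩
  · intro A hA h
    exact sep_B hAD haA hacov hBA ⟨hA, h⟩
  · intro A hA h
    exact sep_C hAD hePart haA hacov hCA hBC ⟨hA, h⟩
  · constructor
    · intro D' hD'
      rcases mem_insert_iff.mp hD' with rfl | hD'
      · exact hPart
      · exact hnice.1 D' hD'
    · intro n Ds hDs f hfin
      by_cases hall : ∀ i, Ds i ∈ 𝒟
      · exact hnice.2 n Ds hall f hfin
      · push_neg at hall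
        obtain ⟨i₀, hi₀⟩ := hall
        have hi₀D : Ds i₀ = Dse 𝒜 ℬ 𝒞 e a := by
          rcases mem_insert_iff.mp (hDs i₀) with h | h
          · exact h
          · exact absurd h hi₀
        by_cases hsame : ∀ i, Ds i = Dse 𝒜 ℬ 𝒞 e a → f i = f i₀
        · set Ds' : Fin n → Set ℕ :=
            fun i => if Ds i = Dse 𝒜 ℬ 𝒞 e a then univ else Ds i with hDs'
          set f' : Fin n → Bool :=
            fun i => if Ds i = Dse 𝒜 ℬ 𝒞 e a then false else f i with hf'
          have key : (⋂ i, boolPart (Ds i) (f i)) =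
              (⋂ i, boolPart (Ds' i) (f' i)) ∩ boolPart (Dse 𝒜 ℬ 𝒞 e a) (f i₀) := by
            apply Subset.antisymm
            · intro x hx
              refine ⟨mem_iInter.mpr fun i => ?_, ?_⟩
              · by_cases hDi : Ds i = Dse 𝒜 ℬ 𝒞 e a
                · simp only [hDs', hf', if_pos hDi]
                  exact mem_univ x
                · simp only [hDs', hf', if_neg hDi]
                  exact mem_iInter.mp hx i
              · have h := mem_iInter.mp hx i₀
                rwa [hi₀D] at h
            · rintro x ⟨hx1, hx2⟩
              refine mem_iInter.mpr fun i => ?_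
              by_cases hDi : Ds i = Dse 𝒜 ℬ 𝒞 e a
              · rw [hDi, hsame i hDi]
                exact hx2
              · have h := mem_iInter.mp hx1 i
                simp only [hDs', hf', if_neg hDi] at h
                exact h
          have H' : ∀ i, (∃ k, e k = Ds' i) ∨ boolPart (Ds' i) (f' i) = univ := by
            intro i
            by_cases hDi : Ds i = Dse 𝒜 ℬ 𝒞 e a
            · right
              simp [hDs', hf', hDi]
            · left
              have hmem : Ds i ∈ 𝒟 := by
                rcases mem_insert_iff.mp (hDs i) with h | h
                · exact absurd h hDi
                · exact h
              obtain ⟨k, hk⟩ := heCov (Ds i) hmem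
              exact ⟨k, by simp [hDs', if_neg hDi, hk]⟩
          rw [key] at hfin ⊢
          cases hb : f i₀
          · rw [hb] at hfin
            rw [boolPart_false] at hfin ⊢
            exact nice_inter hInf hAD hBA hCA hcov hBC haA hacov hePart heNice H' hfin
          · rw [hb] at hfin
            rw [boolPart_true] at hfin ⊢
            exact nice_diff hInf hAD hBA hCA hcov hBC haA hacov hePart heNice H' hfin
        · push_neg at hsame
          obtain ⟨i₁, hi₁D, hi₁f⟩ := hsame
          have hXe : (⋂ i, boolPart (Ds i) (f i)) = ∅ := by
            apply eq_empty_iff_forall_notMem.mpr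
            intro x hx
            have h0 := mem_iInter.mp hx i₀
            have h1 := mem_iInter.mp hx i₁
            rw [hi₀D] at h0
            rw [hi₁D] at h1
            exact hi₁f (mem_boolPart_unique h1 h0)
          have hSe : {A | A ∈ 𝒜 ∧ AlmostSubset A (∅ : Set ℕ)} = ∅ := by
            apply eq_empty_iff_forall_notMem.mpr
            rintro A ⟨hA, hAs⟩
            unfold AlmostSubset at hAs
            rw [diff_empty] at hAs
            exact hInf A hA hAs
          rw [hXe, hSe]
          unfold EqModFin
          simp
end

section
/- Let 𝒜 = {A_α : α < ω₁} be a Luzin family, i.e. an almost disjoint family enumerated so that for every α < ω₁ and every n ∈ ω the set {β < α : A_α ∩ A_β ⊆ n} is finite. Then for any two disjoint uncountable subfamilies ℬ, 𝒞 ⊆ 𝒜 there is no set D ⊆ ω with B ⊆* D for every B ∈ ℬ and C ∩ D finite for every C ∈ 𝒞. -/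
open Set

/-!
If `D` separated `B` from `C`, then, since a countable union of countable sets is countable,
there is a single `n` such that `A β \ D ⊆ n` for uncountably many `β ∈ B` and `A γ ∩ D ⊆ n`
for uncountably many `γ ∈ C`; for any such `β` and `γ` we get `A β ∩ A γ ⊆ n`. Taking
countably infinitely many such `γ` and one such `β` above all of them (every initial segment
of `ω₁` is countable) contradicts the Luzin property at `β` and `n`.
-/

theorem countable_Iic_aleph_one_ord_toType (i : (Cardinal.aleph 1).ord.ToType) :
    (Iic i).Countable := by
  have hIio : (Iio i).Countable := by
    rw [← Cardinal.le_aleph0_iff_set_countable, ← Cardinal.lt_aleph_one_iff]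
    simpa using Cardinal.mk_Iio_lt i (by simp)
  simpa only [Iio_insert] using hIio.insert i

theorem Set.Finite.exists_subset_Iio {α : Type*} [Preorder α] [IsDirectedOrder α] [Nonempty α]
    [NoMaxOrder α] {s : Set α} (hs : s.Finite) : ∃ n, s ⊆ Iio n :=
  let ⟨m, hm⟩ := hs.bddAbove
  let ⟨n, hmn⟩ := exists_gt m
  ⟨n, fun _ hx => (hm hx).trans_lt hmn⟩

theorem Monotone.exists_forall_ge_not_countable {α : Type*} {f : ℕ → Set α} (hf : Monotone f)
    {s : Set α} (hs : ¬ s.Countable) (hsf : s ⊆ ⋃ n, f n) :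
    ∃ n₀, ∀ n ≥ n₀, ¬ (f n).Countable := by
  by_contra! h
  exact hs ((countable_iUnion fun m => let ⟨n, hmn, hn⟩ := h m; hn.mono (hf hmn)).mono hsf)

theorem exists_forall_ge_not_countable_setOf_subset_Iio {ι : Type*} {F : ι → Set ℕ}
    {s : Set ι} (hs : ¬ s.Countable) (hF : ∀ i ∈ s, (F i).Finite) :
    ∃ n₀, ∀ n ≥ n₀, ¬ {i | i ∈ s ∧ F i ⊆ Iio n}.Countable := by
  refine Monotone.exists_forall_ge_not_countable ?_ hs fun i hi => ?_
  · exact fun m n hmn i ⟨his, hi⟩ => ⟨his, hi.trans (Iio_subset_Iio hmn)⟩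
  · obtain ⟨n, hn⟩ := (hF i hi).exists_subset_Iio
    exact mem_iUnion.2 ⟨n, hi, hn⟩

theorem inter_subset_of_diff_subset_of_inter_subset {α : Type*} {X Y D S : Set α}
    (hX : X \ D ⊆ S) (hY : Y ∩ D ⊆ S) : X ∩ Y ⊆ S := fun x ⟨hxX, hxY⟩ =>
  (em (x ∈ D)).elim (fun hxD => hY ⟨hxY, hxD⟩) fun hxD => hX ⟨hxX, hxD⟩

section LinearOrder

variable {ι : Type*} [LinearOrder ι]

theorem exists_mem_forall_lt_of_countable (hIic : ∀ i : ι, (Iic i).Countable) {S T : Set ι}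
    (hS : S.Countable) (hT : ¬ T.Countable) : ∃ t ∈ T, ∀ s ∈ S, s < t := by
  have hU : (⋃ s ∈ S, Iic s).Countable := hS.biUnion fun s _ => hIic s
  obtain ⟨t, htT, ht⟩ := not_subset.1 fun h => hT (hU.mono h)
  simp only [mem_iUnion, mem_Iic, not_exists, not_le] at ht
  exact ⟨t, htT, ht⟩

theorem exists_inter_not_subset_Iio_of_luzin (hIic : ∀ i : ι, (Iic i).Countable)
    {A : ι → Set ℕ}
    (hLuzin : ∀ α, ∀ n : ℕ, {β | β < α ∧ A α ∩ A β ⊆ Iio n}.Finite)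
    {B C : Set ι} (hB : ¬ B.Countable) (hC : C.Infinite) (n : ℕ) :
    ∃ β ∈ B, ∃ γ ∈ C, ¬ A β ∩ A γ ⊆ Iio n := by
  by_contra! h
  obtain ⟨S, hSC, hS, hSinf⟩ := hC.exists_subset_countable_infinite
  obtain ⟨α, hαB, hα⟩ := exists_mem_forall_lt_of_countable hIic hS hB
  exact hSinf ((hLuzin α n).subset fun γ hγ => ⟨hα γ hγ, h α hαB γ (hSC hγ)⟩)

end LinearOrder

theorem statement7_general (A : (Cardinal.aleph 1).ord.ToType → Set ℕ)
    (hLuzin : ∀ α, ∀ n : ℕ, {β | β < α ∧ A α ∩ A β ⊆ Set.Iio n}.Finite)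
    (B C : Set ((Cardinal.aleph 1).ord.ToType))
    (hB : ¬ B.Countable) (hC : ¬ C.Countable) :
    ¬ ∃ D : Set ℕ, (∀ β ∈ B, AlmostSubset (A β) D) ∧ ∀ γ ∈ C, (A γ ∩ D).Finite := by
  rintro ⟨D, hBD, hCD⟩
  obtain ⟨nB, hnB⟩ := exists_forall_ge_not_countable_setOf_subset_Iio hB hBD
  obtain ⟨nC, hnC⟩ := exists_forall_ge_not_countable_setOf_subset_Iio hC hCD
  set n := max nB nC
  obtain ⟨β, ⟨-, hβ⟩, γ, ⟨-, hγ⟩, hβγ⟩ :=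
    exists_inter_not_subset_Iio_of_luzin countable_Iic_aleph_one_ord_toType hLuzin
      (hnB n (le_max_left _ _)) (fun h => hnC n (le_max_right _ _) h.countable) n
  exact hβγ (inter_subset_of_diff_subset_of_inter_subset hβ hγ)

/-- In a Luzin family `{A_α : α < ω₁}`, no two disjoint uncountable
subfamilies can be separated. -/
theorem statement7 (A : (Cardinal.aleph 1).ord.ToType → Set ℕ)
    (hinf : ∀ α, (A α).Infinite) (hinj : Function.Injective A)
    (had : ∀ α β, α ≠ β → (A α ∩ A β).Finite)
    (hLuzin : ∀ α, ∀ n : ℕ, {β | β < α ∧ A α ∩ A β ⊆ Set.Iio n}.Finite)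
    (B C : Set ((Cardinal.aleph 1).ord.ToType))
    (hBC : Disjoint B C) (hB : ¬ B.Countable) (hC : ¬ C.Countable) :
    ¬ ∃ D : Set ℕ, (∀ β ∈ B, AlmostSubset (A β) D) ∧ ∀ γ ∈ C, (A γ ∩ D).Finite :=
  statement7_general A hLuzin B C hB hC
end

section
/- Let 𝒜 be an almost disjoint family on ω. Suppose there exist disjoint subfamilies ℬ, 𝒞 ⊆ 𝒜 and a set X ⊆ ω such that X ∩ B is infinite for every B ∈ ℬ, X ∩ C is finite for every C ∈ 𝒞, and there is no D ⊆ ω with B ⊆* D for every B ∈ ℬ and C ∩ D finite for every C ∈ 𝒞. Then the Ψ-space Ψ(𝒜) is not almost-normal. -/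
open Set

/-- If two disjoint subfamilies `ℬ, 𝒞 ⊆ 𝒜` are weakly separated by some
`X ⊆ ω` but cannot be separated by a set `D`, then `Ψ(𝒜)` is not almost-normal. -/
theorem statement8 (𝒜 : Set (Set ℕ)) (h𝒜 : AlmostDisjointFam 𝒜)
    (ℬ 𝒞 : Set (Set ℕ)) (hB : ℬ ⊆ 𝒜) (hC : 𝒞 ⊆ 𝒜) (hd : Disjoint ℬ 𝒞)
    (X : Set ℕ)
    (hXB : ∀ B ∈ ℬ, (X ∩ B).Infinite)
    (hXC : ∀ C ∈ 𝒞, (X ∩ C).Finite)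
    (hnosep : ¬ ∃ D : Set ℕ, (∀ B ∈ ℬ, AlmostSubset B D) ∧ ∀ C ∈ 𝒞, (C ∩ D).Finite) :
    ¬ @AlmostNormalSp (ℕ ⊕ ↥𝒜) (psiTop 𝒜) := by
  intro hAN
  letI : TopologicalSpace (ℕ ⊕ ↥𝒜) := psiTop 𝒜
  have hopen : ∀ U : Set (ℕ ⊕ ↥𝒜), IsOpen U ↔
      ∀ A : ↥𝒜, Sum.inr A ∈ U → ((A : Set ℕ) \ {n | Sum.inl n ∈ U}).Finite :=
    fun U => Iff.rfl
  set V : Set (ℕ ⊕ ↥𝒜) := Sum.inl '' X with hVdef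
  have hVopen : IsOpen V := by
    rw [hopen]
    rintro A ⟨n, _, h⟩
    exact absurd h (by simp)
  set K : Set (ℕ ⊕ ↥𝒜) := closure V with hKdef
  have hKclosed : IsClosed K := isClosed_closure
  have hKreg : IsRegClosed K := by
    unfold IsRegClosed
    refine subset_antisymm ((closure_mono interior_subset).trans (by rw [hKdef, closure_closure])) ?_
    calc K = closure V := rfl
      _ ⊆ closure (interior K) :=
        closure_mono (hVopen.subset_interior_iff.mpr subset_closure)
  set 𝒞' : Set (ℕ ⊕ ↥𝒜) := Sum.inr '' {A : ↥𝒜 | (A : Set ℕ) ∈ 𝒞} with h𝒞'def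
  have h𝒞'closed : IsClosed 𝒞' := by
    rw [← isOpen_compl_iff, hopen]
    intro A _
    have : {n | Sum.inl n ∈ 𝒞'ᶜ} = univ := by
      ext n; simp [h𝒞'def]
    rw [this]
    simp
  -- every inr B for B ∈ ℬ is in K
  have hBK : ∀ B (hB' : B ∈ ℬ), Sum.inr (⟨B, hB hB'⟩ : ↥𝒜) ∈ K := by
    intro B hB'
    rw [hKdef, mem_closure_iff]
    intro O hO hmem
    have hfin : (B \ {n | Sum.inl n ∈ O}).Finite := (hopen O).mp hO _ hmem
    have : ((X ∩ B) \ (B \ {n | Sum.inl n ∈ O})).Infinite :=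
      (hXB B hB').diff hfin
    obtain ⟨n, hn⟩ := this.nonempty
    refine ⟨Sum.inl n, ?_, ⟨n, hn.1.1, rfl⟩⟩
    by_cases h : Sum.inl n ∈ O
    · exact h
    · exact absurd ⟨hn.1.2, h⟩ hn.2
  -- no inr C for C ∈ 𝒞 is in K
  have hCK : ∀ C (hC' : C ∈ 𝒞), Sum.inr (⟨C, hC hC'⟩ : ↥𝒜) ∉ K := by
    intro C hC' hmem
    rw [hKdef, mem_closure_iff] at hmem
    set N : Set (ℕ ⊕ ↥𝒜) :=
      {Sum.inr (⟨C, hC hC'⟩ : ↥𝒜)} ∪ Sum.inl '' (C \ X) with hNdef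
    have hNopen : IsOpen N := by
      rw [hopen]
      rintro A (hA : Sum.inr A ∈ N)
      rcases hA with hA | ⟨n, _, h⟩
      · have hAC : (A : Set ℕ) = C := by
          simp only [mem_singleton_iff, Sum.inr.injEq] at hA
          exact congrArg Subtype.val hA
        have hsub : (A : Set ℕ) \ {n | Sum.inl n ∈ N} ⊆ X ∩ C := by
          intro n hn
          rw [hAC] at hn
          have : n ∉ C \ X := fun h => hn.2 (Or.inr ⟨n, h, rfl⟩)
          exact ⟨by_contra fun hx => this ⟨hn.1, hx⟩, hn.1⟩
        exact (hXC C hC').subset hsub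
      · exact absurd h (by simp)
    obtain ⟨x, hxN, hxV⟩ := hmem N hNopen (Or.inl rfl)
    obtain ⟨m, hmX, rfl⟩ := hxV
    rcases hxN with h | ⟨n, hn, h⟩
    · simp at h
    · have : n = m := by simpa using h
      exact hn.2 (this ▸ hmX)
  have hdisj : Disjoint 𝒞' K := by
    rw [Set.disjoint_left]
    rintro x ⟨A, hA, rfl⟩ hxK
    exact hCK A hA (by convert hxK)
  have h𝒞'sub : ∀ x ∈ 𝒞', x ∈ 𝒞' := fun _ h => h
  obtain ⟨U, W, hUopen, hWopen, hCU, hKW, hUW⟩ :=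
    hAN 𝒞' K h𝒞'closed hKclosed hKreg hdisj
  apply hnosep
  refine ⟨{n | Sum.inl n ∈ W}, ?_, ?_⟩
  · intro B hB'
    exact (hopen W).mp hWopen _ (hKW (hBK B hB'))
  · intro C hC'
    have hmemU : Sum.inr (⟨C, hC hC'⟩ : ↥𝒜) ∈ U := hCU ⟨_, hC', rfl⟩
    have hfin : (C \ {n | Sum.inl n ∈ U}).Finite := (hopen U).mp hUopen _ hmemU
    apply hfin.subset
    intro n hn
    refine ⟨hn.1, fun h => ?_⟩
    exact (Set.disjoint_left.mp hUW h) hn.2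
end

section
/- Let 𝒜 be an almost disjoint family on ω and let K₀, K₁ be disjoint subsets of the Ψ-space Ψ(𝒜), where K₀ is regular closed and K₁ is π-closed. If at least one of the sets K₀ ∩ 𝒜, K₁ ∩ 𝒜 is finite, then there is a clopen set U ⊆ Ψ(𝒜) with K₀ ⊆ U and U ∩ K₁ = ∅. -/
open Set

/-!
In `Ψ(𝒜)` a closed set `K` meeting `𝒜` in finitely many points `ℬ` can be separated from any
disjoint closed set `C` by a clopen set: take `ℬ` together with the points of `ω` in `K ∪ ⋃ ℬ` that
lie outside `C`. Each `A ∈ ℬ` lies outside `C`, so it meets `C ∩ ω` finitely, which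
makes the set open; each `A ∉ ℬ` lies outside `K` and is almost disjoint from the finitely many
members of `ℬ`, which makes it closed. Regular closed and π-closed sets are closed, and swapping
the roles of `K₀` and `K₁` costs only a complement.
-/

theorem IsRegClosed.isClosed {X : Type*} [TopologicalSpace X] {K : Set X}
    (hK : IsRegClosed K) : IsClosed K :=
  hK ▸ isClosed_closure

theorem IsPiClosed.isClosed {X : Type*} [TopologicalSpace X] {K : Set X}
    (hK : IsPiClosed K) : IsClosed K := by
  obtain ⟨n, f, hf, rfl⟩ := hK
  exact isClosed_iInter fun i => (hf i).isClosed

namespace PsiSpace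

variable {𝒜 : Set (Set ℕ)}

attribute [local instance] psiTop

theorem finite_inter_of_isClosed_of_inr_notMem {C : Set (ℕ ⊕ ↥𝒜)} (hC : IsClosed C)
    {A : ↥𝒜} (hA : Sum.inr A ∉ C) : ((A : Set ℕ) ∩ {n | Sum.inl n ∈ C}).Finite :=
  (hC.isOpen_compl A hA).subset fun _ hn => ⟨hn.1, fun h => h hn.2⟩

theorem finite_inter_biUnion_of_notMem (h𝒜 : 𝒜.Pairwise fun A B => (A ∩ B).Finite)
    {ℬ : Set ↥𝒜} (hℬ : ℬ.Finite) {B : ↥𝒜} (hB : B ∉ ℬ) :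
    ((B : Set ℕ) ∩ ⋃ A ∈ ℬ, (A : Set ℕ)).Finite := by
  rw [inter_iUnion₂]
  refine hℬ.biUnion fun A hA => h𝒜 B.2 A.2 fun h => hB ?_
  rwa [Subtype.ext h]

theorem exists_isClopen_superset_disjoint (h𝒜 : 𝒜.Pairwise fun A B => (A ∩ B).Finite)
    {K C : Set (ℕ ⊕ ↥𝒜)} (hK : IsClosed K) (hC : IsClosed C) (hKC : Disjoint K C)
    (hfin : {A : ↥𝒜 | Sum.inr A ∈ K}.Finite) :
    ∃ U : Set (ℕ ⊕ ↥𝒜), IsClopen U ∧ K ⊆ U ∧ Disjoint U C := by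
  set ℬ : Set ↥𝒜 := {A | Sum.inr A ∈ K}
  set N : Set ℕ := ({n | Sum.inl n ∈ K} ∪ ⋃ A ∈ ℬ, (A : Set ℕ)) \ {n | Sum.inl n ∈ C}
  refine ⟨Sum.elim (· ∈ N) (· ∈ ℬ), ⟨?_, ?_⟩, ?_, ?_⟩
  · refine isOpen_compl_iff.mp fun B (hB : B ∉ ℬ) => ?_
    refine ((finite_inter_of_isClosed_of_inr_notMem hK hB).union
      (finite_inter_biUnion_of_notMem h𝒜 hfin hB)).subset ?_
    rintro n ⟨hnB, hnN⟩
    rcases (not_not.mp hnN).1 with hnK | hnℬ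
    · exact Or.inl ⟨hnB, hnK⟩
    · exact Or.inr ⟨hnB, hnℬ⟩
  · intro A (hA : A ∈ ℬ)
    refine (finite_inter_of_isClosed_of_inr_notMem hC (hKC.notMem_of_mem_left hA)).subset ?_
    rintro n ⟨hnA, hnN⟩
    by_contra hnC
    exact hnN ⟨Or.inr (mem_biUnion hA hnA), fun h => hnC ⟨hnA, h⟩⟩
  · rintro (n | A) hx
    · exact ⟨Or.inl hx, hKC.notMem_of_mem_left hx⟩
    · exact hx
  · refine disjoint_left.mpr ?_
    rintro (n | A) hx hxC
    · exact hx.2 hxC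
    · exact hKC.notMem_of_mem_left hx hxC

end PsiSpace

/-- If `K₀` is regular closed, `K₁` is π-closed, they are disjoint, and one
of them contains only finitely many points of `𝒜`, then they can be separated by a
clopen set. -/
theorem statement10 (𝒜 : Set (Set ℕ)) (h𝒜 : AlmostDisjointFam 𝒜)
    (K₀ K₁ : Set (ℕ ⊕ ↥𝒜)) (hd : Disjoint K₀ K₁)
    (h0 : @IsRegClosed (ℕ ⊕ ↥𝒜) (psiTop 𝒜) K₀)
    (h1 : @IsPiClosed (ℕ ⊕ ↥𝒜) (psiTop 𝒜) K₁)
    (hfin : {A : ↥𝒜 | Sum.inr A ∈ K₀}.Finite ∨ {A : ↥𝒜 | Sum.inr A ∈ K₁}.Finite) :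
    ∃ U : Set (ℕ ⊕ ↥𝒜), @IsOpen (ℕ ⊕ ↥𝒜) (psiTop 𝒜) U ∧
      @IsClosed (ℕ ⊕ ↥𝒜) (psiTop 𝒜) U ∧ K₀ ⊆ U ∧ Disjoint U K₁ := by
  let _ := psiTop 𝒜
  rcases hfin with hfin₀ | hfin₁
  · obtain ⟨U, hU, hK₀U, hUK₁⟩ :=
      PsiSpace.exists_isClopen_superset_disjoint h𝒜.2 h0.isClosed h1.isClosed hd hfin₀
    exact ⟨U, hU.isOpen, hU.isClosed, hK₀U, hUK₁⟩
  · obtain ⟨V, hV, hK₁V, hVK₀⟩ :=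
      PsiSpace.exists_isClopen_superset_disjoint h𝒜.2 h1.isClosed h0.isClosed hd.symm hfin₁
    exact ⟨Vᶜ, hV.compl.isOpen, hV.compl.isClosed, hVK₀.subset_compl_left,
      disjoint_compl_left_iff_subset.mpr hK₁V⟩
end

section
/- Assuming the continuum hypothesis, there exists an almost disjoint family 𝒜 on ω that is strongly ℵ₀-separated but whose Ψ-space Ψ(𝒜) is not almost-normal. -/
open Set

/-
Under CH, list all pairs `(D, f)` of a set `D ⊆ ℕ` and a sequence `f` of subsets of `ℕ` in
order type `ω₁`, and build the family along this list, starting from a partition of `ℕ` into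
columns that meet both the even and the odd numbers infinitely. At stage `(D, f)` we fix a set
`P` separating the members built so far that are listed by `f` from the other members; then,
unless the odd numbers outside `D` are almost covered by finitely many members, we add an
infinite set of such odd numbers, almost disjoint from all members so far and decided by every
`P` fixed up to now. All later members respect `P`, so `P` is a partitioner of the final
family: this gives strong ℵ₀-separation.

In `Ψ(𝒜)` the closure `K` of the (open) set of even numbers is regular closed; its points in `𝒜`
are the members meeting the evens infinitely, so the members meeting them finitely form a closed
set `C` disjoint from `K`. If `U ⊇ C` and `V ⊇ K` were disjoint open sets, let `D` be the trace of `U` on `ℕ`. At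
stage `(D, f)` either a member in `C` was added outside `D`, so outside `U`, or the odd numbers
outside `D` are almost covered by finitely many members; then some column has almost all of its
odd part in `D`, so it lies in `K` and meets `U` infinitely.
-/

def AlmostCoveredByFinite (𝒢 : Set (Set ℕ)) (S : Set ℕ) : Prop :=
  ∃ t ⊆ 𝒢, t.Finite ∧ AlmostSubset S (⋃₀ t)

namespace AlmostCoveredByFinite

variable {𝒢 : Set (Set ℕ)} {S T : Set ℕ}

lemma mono (h : AlmostCoveredByFinite 𝒢 S) (hTS : T ⊆ S) : AlmostCoveredByFinite 𝒢 T := by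
  obtain ⟨t, ht𝒢, htfin, hS⟩ := h
  exact ⟨t, ht𝒢, htfin, hS.subset (sdiff_subset_sdiff_left hTS)⟩

lemma union (hS : AlmostCoveredByFinite 𝒢 S) (hT : AlmostCoveredByFinite 𝒢 T) :
    AlmostCoveredByFinite 𝒢 (S ∪ T) := by
  obtain ⟨s, hs𝒢, hsfin, hS⟩ := hS
  obtain ⟨t, ht𝒢, htfin, hT⟩ := hT
  refine ⟨s ∪ t, union_subset hs𝒢 ht𝒢, hsfin.union htfin, (hS.union hT).subset ?_⟩
  rw [sUnion_union, union_sdiff_distrib]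
  exact union_subset_union (sdiff_subset_sdiff_right subset_union_left)
    (sdiff_subset_sdiff_right subset_union_right)

lemma of_insert_empty (h : AlmostCoveredByFinite (insert ∅ 𝒢) S) : AlmostCoveredByFinite 𝒢 S := by
  obtain ⟨t, ht𝒢, htfin, hS⟩ := h
  refine ⟨t \ {∅}, fun G hG => (ht𝒢 hG.1).resolve_left hG.2, htfin.sdiff, ?_⟩
  rwa [sUnion_sdiff_singleton_empty]

lemma exists_inter_finite (h : AlmostCoveredByFinite 𝒢 S)
    (h𝒢 : 𝒢.Pairwise fun A B => (A ∩ B).Finite) {𝒜₀ : Set (Set ℕ)} (h𝒜₀ : 𝒜₀ ⊆ 𝒢)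
    (hinf : 𝒜₀.Infinite) : ∃ B ∈ 𝒜₀, (B ∩ S).Finite := by
  obtain ⟨t, ht𝒢, htfin, hS⟩ := h
  obtain ⟨B, hB, hBt⟩ := hinf.exists_notMem_finite htfin
  refine ⟨B, hB, (hS.union (htfin.biUnion fun G hG =>
    h𝒢 (h𝒜₀ hB) (ht𝒢 hG) fun hBG => hBt (hBG ▸ hG))).subset ?_⟩
  rintro n ⟨hnB, hnS⟩
  by_cases hn : n ∈ ⋃₀ t
  · obtain ⟨G, hG, hnG⟩ := hn
    exact Or.inr (mem_biUnion hG ⟨hnB, hnG⟩)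
  · exact Or.inl ⟨hnS, hn⟩

end AlmostCoveredByFinite

lemma not_almostCoveredByFinite_inter_or_diff {𝒢 : Set (Set ℕ)} {V : Set ℕ}
    (h : ¬ AlmostCoveredByFinite 𝒢 V) (D : Set ℕ) :
    ¬ AlmostCoveredByFinite 𝒢 (V ∩ D) ∨ ¬ AlmostCoveredByFinite 𝒢 (V \ D) := by
  by_contra! hcov
  exact h ((hcov.1.union hcov.2).mono (inter_union_sdiff V D).ge)

structure IsFreshSubset (𝒢 𝒟 : Set (Set ℕ)) (S A : Set ℕ) : Prop where
  subset : A ⊆ S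
  infinite : A.Infinite
  inter_finite : ∀ G ∈ 𝒢, (A ∩ G).Finite
  decided : ∀ P ∈ 𝒟, AlmostSubset A P ∨ (A ∩ P).Finite

lemma IsFreshSubset.mono {𝒢 𝒢' 𝒟 𝒟' : Set (Set ℕ)} {S A : Set ℕ} (h : IsFreshSubset 𝒢 𝒟 S A)
    (h𝒢 : 𝒢' ⊆ 𝒢) (h𝒟 : 𝒟' ⊆ 𝒟) : IsFreshSubset 𝒢' 𝒟' S A :=
  ⟨h.subset, h.infinite, fun G hG => h.inter_finite G (h𝒢 hG), fun P hP => h.decided P (h𝒟 hP)⟩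

lemma exists_strictMono_forall_mem {W : ℕ → Set ℕ} (hW : ∀ k, (W k).Infinite) :
    ∃ a : ℕ → ℕ, StrictMono a ∧ ∀ k, a k ∈ W k := by
  choose next hnext using fun k n => (hW k).exists_gt n
  let a : ℕ → ℕ := fun k => Nat.rec (next 0 0) (fun k ak => next (k + 1) ak) k
  refine ⟨a, strictMono_nat_of_lt_succ fun k => (hnext (k + 1) (a k)).2, fun k => ?_⟩
  cases k <;> exact (hnext _ _).1

lemma finite_range_inter_of_forall_lt {a : ℕ → ℕ} {X : Set ℕ} (n : ℕ)
    (h : ∀ k, n < k → a k ∉ X) : (range a ∩ X).Finite :=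
  ((finite_Iic n).image a).subset <| by
    rintro _ ⟨⟨k, rfl⟩, hk⟩
    exact ⟨k, not_lt.1 fun hnk => h k hnk hk, rfl⟩

lemma exists_antitone_deciding {𝒢 : Set (Set ℕ)} {S : Set ℕ}
    (hS : ¬ AlmostCoveredByFinite 𝒢 S) (d : ℕ → Set ℕ) :
    ∃ V : ℕ → Set ℕ, V 0 = S ∧ Antitone V ∧ (∀ m, ¬ AlmostCoveredByFinite 𝒢 (V m)) ∧
      ∀ m, V (m + 1) ⊆ d m ∨ V (m + 1) ⊆ (d m)ᶜ := by
  classical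
  let V : ℕ → Set ℕ := fun m => Nat.rec S (fun m Vm =>
    if AlmostCoveredByFinite 𝒢 (Vm ∩ d m) then Vm \ d m else Vm ∩ d m) m
  have hVsucc (m : ℕ) : V (m + 1) =
      if AlmostCoveredByFinite 𝒢 (V m ∩ d m) then V m \ d m else V m ∩ d m := rfl
  have hVcov (m : ℕ) : ¬ AlmostCoveredByFinite 𝒢 (V m) := by
    induction m with
    | zero => exact hS
    | succ m ih =>
      rw [hVsucc]
      split_ifs with hcov
      · exact (not_almostCoveredByFinite_inter_or_diff ih (d m)).resolve_left (not_not.2 hcov)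
      · exact hcov
  refine ⟨V, rfl, antitone_nat_of_succ_le fun m => ?_, hVcov, fun m => ?_⟩ <;> rw [hVsucc] <;>
    split_ifs
  · exact sdiff_subset
  · exact inter_subset_left
  · exact Or.inr fun n hn => hn.2
  · exact Or.inl inter_subset_right

lemma exists_isFreshSubset_range (g d : ℕ → Set ℕ) {S : Set ℕ}
    (hS : ¬ AlmostCoveredByFinite (range g) S) : ∃ A, IsFreshSubset (range g) (range d) S A := by
  obtain ⟨V, hV0, hVanti, hVcov, hVd⟩ := exists_antitone_deciding hS d
  have hW (k : ℕ) : (V k \ ⋃ i ∈ Iio k, g i).Infinite := by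
    intro hfin
    refine hVcov k ⟨g '' Iio k, image_subset_range _ _, (finite_Iio k).image g, ?_⟩
    rwa [sUnion_image]
  obtain ⟨a, ha, haW⟩ := exists_strictMono_forall_mem hW
  have hlate (m k : ℕ) (hmk : m < k) : a k ∈ V (m + 1) := hVanti hmk (haW k).1
  refine ⟨range a, ⟨?_, infinite_range_of_injective ha.injective, ?_, ?_⟩⟩
  · rintro _ ⟨k, rfl⟩
    exact hV0 ▸ hVanti (Nat.zero_le k) (haW k).1
  · rintro _ ⟨i, rfl⟩
    exact finite_range_inter_of_forall_lt i fun k hik hk => (haW k).2 (mem_biUnion hik hk)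
  · rintro _ ⟨m, rfl⟩
    rcases hVd m with hsub | hsub
    · exact Or.inl <| finite_range_inter_of_forall_lt m fun k hk hak => hak (hsub (hlate m k hk))
    · exact Or.inr <| finite_range_inter_of_forall_lt m fun k hk hak => hsub (hlate m k hk) hak

lemma exists_isFreshSubset {𝒢 𝒟 : Set (Set ℕ)} {S : Set ℕ} (h𝒢 : 𝒢.Countable)
    (h𝒟 : 𝒟.Countable) (hS : ¬ AlmostCoveredByFinite 𝒢 S) : ∃ A, IsFreshSubset 𝒢 𝒟 S A := by
  obtain ⟨g, hg⟩ := (h𝒢.insert ∅).exists_eq_range (insert_nonempty _ _)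
  obtain ⟨d, hd⟩ := (h𝒟.insert ∅).exists_eq_range (insert_nonempty _ _)
  obtain ⟨A, hA⟩ := exists_isFreshSubset_range g d (S := S) (by
    rw [← hg]
    exact fun h => hS h.of_insert_empty)
  exact ⟨A, hA.mono (hg ▸ subset_insert _ _) (hd ▸ subset_insert _ _)⟩

def Separates (ℬ 𝒞 : Set (Set ℕ)) (D : Set ℕ) : Prop :=
  (∀ B ∈ ℬ, AlmostSubset B D) ∧ ∀ C ∈ 𝒞, (C ∩ D).Finite

lemma Separates.mono {ℬ ℬ' 𝒞 𝒞' : Set (Set ℕ)} {D : Set ℕ} (h : Separates ℬ 𝒞 D) (hℬ : ℬ' ⊆ ℬ)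
    (h𝒞 : 𝒞' ⊆ 𝒞) : Separates ℬ' 𝒞' D :=
  ⟨fun B hB => h.1 B (hℬ hB), fun C hC => h.2 C (h𝒞 hC)⟩

lemma exists_separates_range (b c : ℕ → Set ℕ) (h : ∀ i j, (b i ∩ c j).Finite) :
    ∃ D, Separates (range b) (range c) D := by
  refine ⟨⋃ k, b k \ ⋃ j ∈ Iic k, c j, ?_, ?_⟩
  · rintro _ ⟨i, rfl⟩
    refine ((finite_Iic i).biUnion fun j _ => h i j).subset ?_
    rintro n ⟨hnb, hnD⟩
    have hnc : n ∈ ⋃ j ∈ Iic i, c j := by_contra fun hn => hnD (mem_iUnion.2 ⟨i, hnb, hn⟩)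
    obtain ⟨j, hj, hnj⟩ := mem_iUnion₂.1 hnc
    exact mem_iUnion₂.2 ⟨j, hj, hnb, hnj⟩
  · rintro _ ⟨j, rfl⟩
    refine ((finite_Iio j).biUnion fun k _ => h k j).subset ?_
    rintro n ⟨hnc, hnD⟩
    obtain ⟨k, hnb, hnk⟩ := mem_iUnion.1 hnD
    have hkj : k < j := not_le.1 fun hjk => hnk (mem_iUnion₂.2 ⟨j, hjk, hnc⟩)
    exact mem_iUnion₂.2 ⟨k, hkj, hnb, hnc⟩

lemma exists_separates {ℬ 𝒞 : Set (Set ℕ)} (hℬ : ℬ.Countable) (h𝒞 : 𝒞.Countable)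
    (h : ∀ B ∈ ℬ, ∀ C ∈ 𝒞, (B ∩ C).Finite) : ∃ D, Separates ℬ 𝒞 D := by
  obtain ⟨b, hb⟩ := (hℬ.insert ∅).exists_eq_range (insert_nonempty _ _)
  obtain ⟨c, hc⟩ := (h𝒞.insert ∅).exists_eq_range (insert_nonempty _ _)
  have hbc (i j : ℕ) : (b i ∩ c j).Finite := by
    have hbi : b i ∈ insert ∅ ℬ := hb ▸ mem_range_self i
    have hcj : c j ∈ insert ∅ 𝒞 := hc ▸ mem_range_self j
    rcases hbi with hbi | hbi
    · simp [hbi]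
    rcases hcj with hcj | hcj
    · simp [hcj]
    exact h _ hbi _ hcj
  obtain ⟨D, hD⟩ := exists_separates_range b c hbc
  exact ⟨D, hD.mono (hb ▸ subset_insert _ _) (hc ▸ subset_insert _ _)⟩

lemma IsOpen.isRegClosed_closure {X : Type*} [TopologicalSpace X] {O : Set X} (hO : IsOpen O) :
    IsRegClosed (closure O) :=
  (closure_minimal interior_subset isClosed_closure).antisymm
    (closure_mono hO.subset_interior_closure)

section PsiSpace

variable {𝒜 : Set (Set ℕ)}

lemma psiTop_isOpen_of_subset_range_inl {U : Set (ℕ ⊕ ↥𝒜)} (hU : U ⊆ range Sum.inl) :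
    @IsOpen _ (psiTop 𝒜) U := by
  intro A hA
  obtain ⟨n, hn⟩ := hU hA
  exact absurd hn Sum.inl_ne_inr

lemma psiTop_isClosed_of_subset_range_inr {C : Set (ℕ ⊕ ↥𝒜)} (hC : C ⊆ range Sum.inr) :
    @IsClosed _ (psiTop 𝒜) C := by
  refine @isOpen_compl_iff _ _ (psiTop 𝒜) |>.1 fun A _ => finite_empty.subset ?_
  rintro n ⟨-, hn⟩
  obtain ⟨A, hA⟩ := hC (not_not.1 hn)
  exact Sum.inr_ne_inl hA

lemma psiTop_inr_mem_closure_iff (A : ↥𝒜) (E : Set ℕ) :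
    Sum.inr A ∈ @closure _ (psiTop 𝒜) (Sum.inl '' E) ↔ ((A : Set ℕ) ∩ E).Infinite := by
  let _ := psiTop 𝒜
  constructor
  · intro hA
    have hclosed : IsClosed (Sum.inl '' E ∪ Sum.inr '' {B : ↥𝒜 | ((B : Set ℕ) ∩ E).Infinite}) := by
      refine isOpen_compl_iff.1 fun B hB => ?_
      refine (not_infinite.1 fun hinf => hB (Or.inr ⟨B, hinf, rfl⟩)).subset ?_
      rintro n ⟨hnB, hn⟩
      exact ⟨hnB, by simpa using hn⟩
    simpa using closure_minimal subset_union_left hclosed hA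
  · intro hinf
    refine mem_closure_iff.2 fun U hU hAU => ?_
    obtain ⟨n, ⟨hnA, hnE⟩, hn⟩ := (hinf.sdiff (hU A hAU)).nonempty
    exact ⟨Sum.inl n, not_not.1 fun hnU => hn ⟨hnA, hnU⟩, n, hnE, rfl⟩

lemma psiTop_not_almostNormal (E : Set ℕ)
    (h : ∀ D : Set ℕ, ∃ A ∈ 𝒜, ((A ∩ E).Finite ∧ (A \ D).Infinite) ∨
      ((A ∩ E).Infinite ∧ (A ∩ D).Infinite)) :
    ¬ @AlmostNormalSp (ℕ ⊕ ↥𝒜) (psiTop 𝒜) := by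
  let _ := psiTop 𝒜
  intro hnormal
  let C : Set (ℕ ⊕ ↥𝒜) := Sum.inr '' {A : ↥𝒜 | ((A : Set ℕ) ∩ E).Finite}
  let K : Set (ℕ ⊕ ↥𝒜) := closure (Sum.inl '' E)
  have hCK : Disjoint C K := by
    refine disjoint_left.2 ?_
    rintro _ ⟨A, hA, rfl⟩ hAK
    exact (psiTop_inr_mem_closure_iff A E).1 hAK hA
  obtain ⟨U, V, hU, hV, hCU, hKV, hUV⟩ := hnormal C K
    (psiTop_isClosed_of_subset_range_inr (image_subset_range _ _)) isClosed_closure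
    (psiTop_isOpen_of_subset_range_inl (image_subset_range _ _)).isRegClosed_closure hCK
  obtain ⟨A, hA𝒜, ⟨hfin, hinf⟩ | ⟨hinf, hinfU⟩⟩ := h {n | Sum.inl n ∈ U}
  · exact hinf (hU ⟨A, hA𝒜⟩ (hCU ⟨⟨A, hA𝒜⟩, hfin, rfl⟩))
  · refine hinfU ((hV ⟨A, hA𝒜⟩ (hKV ((psiTop_inr_mem_closure_iff _ E).2 hinf))).subset ?_)
    rintro n ⟨hnA, hnU⟩
    exact ⟨hnA, disjoint_left.1 hUV hnU⟩

end PsiSpace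

lemma exists_wellOrder_countable_Iio {α : Type*} (hα : Cardinal.mk α = Cardinal.aleph 1) :
    ∃ r : α → α → Prop, IsWellOrder α r ∧ ∀ x, {y | r y x}.Countable := by
  obtain ⟨r, hwo, hr⟩ := Cardinal.exists_ord_eq α
  refine ⟨r, hwo, fun x => ?_⟩
  rw [← Cardinal.le_aleph0_iff_set_countable, ← Cardinal.lt_aleph_one_iff, ← hα]
  exact (by simpa using Cardinal.card_typein_lt x hr : Cardinal.mk {y // r y x} < _)

lemma exists_mem_forall_rel {α : Type*} {r : α → α → Prop} [Std.Trichotomous r]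
    (hr : ∀ x, {y | r y x}.Countable) {Y T : Set α} (hY : ¬ Y.Countable) (hT : T.Countable) :
    ∃ x ∈ Y, ∀ t ∈ T, r t x := by
  by_contra! h
  refine hY ((hT.biUnion fun t _ => (hr t).insert t).mono fun x hx => ?_)
  obtain ⟨t, ht, hxt⟩ := h x hx
  refine mem_biUnion ht ?_
  rcases trichotomous_of r x t with hlt | rfl | hgt
  · exact mem_insert_of_mem _ hlt
  · exact mem_insert _ _
  · exact absurd hgt hxt

def evens : Set ℕ := {m | Even m}

def column (n : ℕ) : Set ℕ := {m | (m / 2).unpair.1 = n}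

lemma two_mul_pair_add_mem_column (n k b : ℕ) (hb : b < 2) : 2 * Nat.pair n k + b ∈ column n := by
  simp [column, show (2 * Nat.pair n k + b) / 2 = Nat.pair n k by omega]

lemma two_mul_pair_add_injective (n b : ℕ) : Function.Injective fun k => 2 * Nat.pair n k + b :=
  fun k l hkl => by simpa using hkl

lemma column_inter_evens_infinite (n : ℕ) : (column n ∩ evens).Infinite :=
  infinite_of_injective_forall_mem (two_mul_pair_add_injective n 0) fun k =>
    ⟨two_mul_pair_add_mem_column n k 0 two_pos, even_two_mul _⟩

lemma column_diff_evens_infinite (n : ℕ) : (column n \ evens).Infinite :=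
  infinite_of_injective_forall_mem (two_mul_pair_add_injective n 1) fun k =>
    ⟨two_mul_pair_add_mem_column n k 1 one_lt_two, Nat.not_even_two_mul_add_one _⟩

lemma disjoint_column {n m : ℕ} (hnm : n ≠ m) : Disjoint (column n) (column m) :=
  disjoint_left.2 fun _ hn hm => hnm (hn.symm.trans hm)

lemma column_injective : Function.Injective column := fun n m hnm => by
  by_contra hne
  have := disjoint_column hne
  rw [hnm, disjoint_self] at this
  exact (column_inter_evens_infinite m).nonempty.ne_empty (by simp [this])

abbrev Requirement : Type := Set ℕ × (ℕ → Set ℕ)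

lemma not_countable_setOf_snd_eq (f : ℕ → Set ℕ) : ¬ {x : Requirement | x.2 = f}.Countable := by
  have : Uncountable (Set ℕ) :=
    Cardinal.aleph0_lt_mk_iff.1 (Cardinal.mk_set_nat ▸ Cardinal.aleph0_lt_continuum)
  refine fun h => not_countable_univ (MapsTo.countable_of_injOn (f := fun D => (D, f))
    (fun _ _ => rfl) (fun _ _ _ _ hDE => congrArg Prod.fst hDE) h)

section Construction

variable (r : Requirement → Requirement → Prop)

def familyBefore (x : Requirement) (prior : ∀ y, r y x → Option (Set ℕ) × Set ℕ) :
    Set (Set ℕ) :=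
  range column ∪ {A | ∃ y h, (prior y h).1 = some A}

def partitionersBefore (x : Requirement) (prior : ∀ y, r y x → Option (Set ℕ) × Set ℕ) :
    Set (Set ℕ) :=
  {P | ∃ y h, (prior y h).2 = P}

open Classical in
noncomputable def step (x : Requirement) (prior : ∀ y, r y x → Option (Set ℕ) × Set ℕ) :
    Option (Set ℕ) × Set ℕ :=
  let 𝒢 := familyBefore r x prior
  let P := Classical.epsilon (Separates (𝒢 ∩ range x.2) (𝒢 \ range x.2))
  (if AlmostCoveredByFinite 𝒢 (evensᶜ \ x.1) then none
    else some (Classical.epsilon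
      (IsFreshSubset 𝒢 (insert P (partitionersBefore r x prior)) (evensᶜ \ x.1))),
    P)

variable [IsWellOrder Requirement r]

noncomputable def stage : Requirement → Option (Set ℕ) × Set ℕ := IsWellFounded.fix r (step r)

noncomputable def newMember (x : Requirement) : Option (Set ℕ) := (stage r x).1

noncomputable def partitioner (x : Requirement) : Set ℕ := (stage r x).2

def familyAt (x : Requirement) : Set (Set ℕ) := familyBefore r x fun y _ => stage r y

def partitionersAt (x : Requirement) : Set (Set ℕ) := partitionersBefore r x fun y _ => stage r y

def builtFamily : Set (Set ℕ) := range column ∪ {A | ∃ x, newMember r x = some A}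

variable {r}

lemma mem_familyAt {x : Requirement} {A : Set ℕ} :
    A ∈ familyAt r x ↔ A ∈ range column ∨ ∃ y, r y x ∧ newMember r y = some A := by
  simp [familyAt, familyBefore, newMember]

lemma partitioner_eq (x : Requirement) : partitioner r x =
    Classical.epsilon (Separates (familyAt r x ∩ range x.2) (familyAt r x \ range x.2)) := by
  rw [partitioner, stage, IsWellFounded.fix_eq]
  rfl

open Classical in
lemma newMember_eq (x : Requirement) : newMember r x =
    if AlmostCoveredByFinite (familyAt r x) (evensᶜ \ x.1) then none
    else some (Classical.epsilon (IsFreshSubset (familyAt r x)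
      (insert (partitioner r x) (partitionersAt r x)) (evensᶜ \ x.1))) := by
  rw [newMember, partitioner_eq, stage, IsWellFounded.fix_eq]
  rfl

lemma familyAt_subset_builtFamily (x : Requirement) : familyAt r x ⊆ builtFamily r := by
  intro A hA
  rcases mem_familyAt.1 hA with hA | ⟨y, -, hy⟩
  · exact Or.inl hA
  · exact Or.inr ⟨y, hy⟩

variable (hr : ∀ x, {y | r y x}.Countable)
include hr

lemma familyAt_countable (x : Requirement) : (familyAt r x).Countable := by
  have := (hr x).to_subtype
  refine (countable_range column).union <|
    (countable_range fun y : {y | r y x} => (newMember r y).getD ∅).mono ?_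
  rintro A ⟨y, hy, hA⟩
  exact ⟨⟨y, hy⟩, by simp [newMember, hA]⟩

lemma partitionersAt_countable (x : Requirement) : (partitionersAt r x).Countable := by
  have := (hr x).to_subtype
  refine (countable_range fun y : {y | r y x} => partitioner r y).mono ?_
  rintro P ⟨y, hy, rfl⟩
  exact ⟨⟨y, hy⟩, rfl⟩

lemma isFreshSubset_of_newMember_eq {x : Requirement} {A : Set ℕ}
    (hA : newMember r x = some A) : IsFreshSubset (familyAt r x)
      (insert (partitioner r x) (partitionersAt r x)) (evensᶜ \ x.1) A := by
  rw [newMember_eq] at hA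
  split_ifs at hA with hcov
  cases hA
  exact Classical.epsilon_spec (exists_isFreshSubset (familyAt_countable hr x)
    ((partitionersAt_countable hr x).insert _) hcov)

omit hr in
lemma almostCoveredByFinite_of_newMember_eq_none {x : Requirement} (hx : newMember r x = none) :
    AlmostCoveredByFinite (familyAt r x) (evensᶜ \ x.1) := by
  by_contra hcov
  rw [newMember_eq, if_neg hcov] at hx
  exact Option.some_ne_none _ hx

lemma newMember_subsingleton (A : Set ℕ) : {y | newMember r y = some A}.Subsingleton := by
  intro y hy z hz
  by_contra hyz
  rcases trichotomous_of r y z with hlt | rfl | hgt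
  · have hA := isFreshSubset_of_newMember_eq hr hz
    exact hA.infinite (inter_self A ▸ hA.inter_finite A (mem_familyAt.2 (Or.inr ⟨y, hlt, hy⟩)))
  · exact hyz rfl
  · have hA := isFreshSubset_of_newMember_eq hr hy
    exact hA.infinite (inter_self A ▸ hA.inter_finite A (mem_familyAt.2 (Or.inr ⟨z, hgt, hz⟩)))

lemma newMember_inter_finite {x : Requirement} {A B : Set ℕ} (hA : newMember r x = some A)
    (hB : B ∈ builtFamily r) (hAB : A ≠ B) : (A ∩ B).Finite := by
  have hfresh := isFreshSubset_of_newMember_eq hr hA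
  rcases hB with hB | ⟨y, hy⟩
  · exact hfresh.inter_finite B (mem_familyAt.2 (Or.inl hB))
  rcases trichotomous_of r x y with hlt | rfl | hgt
  · rw [inter_comm]
    exact (isFreshSubset_of_newMember_eq hr hy).inter_finite A
      (mem_familyAt.2 (Or.inr ⟨x, hlt, hA⟩))
  · exact absurd (Option.some_injective _ (hA.symm.trans hy)) hAB
  · exact hfresh.inter_finite B (mem_familyAt.2 (Or.inr ⟨y, hgt, hy⟩))

lemma builtFamily_almostDisjoint : AlmostDisjointFam (builtFamily r) := by
  refine ⟨?_, ?_⟩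
  · rintro A (⟨n, rfl⟩ | ⟨x, hx⟩)
    · exact (column_inter_evens_infinite n).mono inter_subset_left
    · exact (isFreshSubset_of_newMember_eq hr hx).infinite
  · rintro A (⟨n, rfl⟩ | ⟨x, hx⟩) B hB hAB
    · rcases hB with ⟨m, rfl⟩ | ⟨y, hy⟩
      · exact (disjoint_column fun h => hAB (congrArg column h)).inter_eq ▸ finite_empty
      · exact inter_comm (column n) B ▸ newMember_inter_finite hr hy (Or.inl ⟨n, rfl⟩) hAB.symm
    · exact newMember_inter_finite hr hx hB hAB

lemma familyAt_pairwise (x : Requirement) :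
    (familyAt r x).Pairwise fun A B => (A ∩ B).Finite :=
  fun _ hA _ hB hAB => (builtFamily_almostDisjoint hr).2 _ (familyAt_subset_builtFamily x hA) _
    (familyAt_subset_builtFamily x hB) hAB

lemma partitioner_separates (x : Requirement) :
    Separates (familyAt r x ∩ range x.2) (familyAt r x \ range x.2) (partitioner r x) := by
  rw [partitioner_eq]
  exact Classical.epsilon_spec (exists_separates ((familyAt_countable hr x).mono inter_subset_left)
    ((familyAt_countable hr x).mono sdiff_subset)
    fun B hB C hC => familyAt_pairwise hr x hB.1 hC.1 fun h => hC.2 (h ▸ hB.2))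

lemma partitioner_isPartitioner (x : Requirement) :
    IsPartitioner (builtFamily r) (partitioner r x) := by
  have hfamily (A : Set ℕ) (hA : A ∈ familyAt r x) :
      AlmostSubset A (partitioner r x) ∨ (A ∩ partitioner r x).Finite := by
    by_cases hAx : A ∈ range x.2
    · exact Or.inl ((partitioner_separates hr x).1 A ⟨hA, hAx⟩)
    · exact Or.inr ((partitioner_separates hr x).2 A ⟨hA, hAx⟩)
  rintro A (hA | ⟨y, hy⟩)
  · exact hfamily A (mem_familyAt.2 (Or.inl hA))
  rcases trichotomous_of r y x with hlt | rfl | hgt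
  · exact hfamily A (mem_familyAt.2 (Or.inr ⟨y, hlt, hy⟩))
  · exact (isFreshSubset_of_newMember_eq hr hy).decided _ (mem_insert _ _)
  · exact (isFreshSubset_of_newMember_eq hr hy).decided _ (mem_insert_of_mem _ ⟨x, hgt, rfl⟩)

lemma exists_familyAt_superset (f : ℕ → Set ℕ) {𝒮 : Set (Set ℕ)} (h𝒮 : 𝒮.Countable)
    (h𝒮r : 𝒮 ⊆ builtFamily r) : ∃ x : Requirement, x.2 = f ∧ 𝒮 ⊆ familyAt r x := by
  obtain ⟨x, hxf, hx⟩ := exists_mem_forall_rel hr (not_countable_setOf_snd_eq f)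
    (h𝒮.biUnion fun A _ => (newMember_subsingleton hr A).countable)
  refine ⟨x, hxf, fun A hA => mem_familyAt.2 ?_⟩
  rcases h𝒮r hA with hA' | ⟨y, hy⟩
  · exact Or.inl hA'
  · exact Or.inr ⟨y, hx y (mem_biUnion hA hy), hy⟩

lemma builtFamily_stronglyAleph0Separated : StronglyAleph0Separated (builtFamily r) := by
  intro ℬ 𝒞 hℬ h𝒞 hℬc h𝒞c hℬ𝒞
  obtain ⟨f, hf⟩ := (hℬc.insert ∅).exists_eq_range (insert_nonempty _ _)
  obtain ⟨x, rfl, hx⟩ := exists_familyAt_superset hr f (hℬc.union h𝒞c) (union_subset hℬ h𝒞)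
  refine ⟨partitioner r x, partitioner_isPartitioner hr x, fun B hB => ?_, fun C hC => ?_⟩
  · exact (partitioner_separates hr x).1 B ⟨hx (Or.inl hB), hf ▸ mem_insert_of_mem _ hB⟩
  · refine (partitioner_separates hr x).2 C ⟨hx (Or.inr hC), ?_⟩
    rw [← hf]
    rintro (rfl | hCℬ)
    · exact (builtFamily_almostDisjoint hr).1 _ (h𝒞 hC) finite_empty
    · exact disjoint_left.1 hℬ𝒞 hCℬ hC

lemma builtFamily_defeats (D : Set ℕ) : ∃ A ∈ builtFamily r,
    ((A ∩ evens).Finite ∧ (A \ D).Infinite) ∨ ((A ∩ evens).Infinite ∧ (A ∩ D).Infinite) := by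
  cases hx : newMember r (D, fun _ => ∅) with
  | some A =>
    have hA := isFreshSubset_of_newMember_eq hr hx
    refine ⟨A, Or.inr ⟨_, hx⟩, Or.inl ⟨finite_empty.subset fun n hn => (hA.subset hn.1).1 hn.2,
      hA.infinite.mono fun n hn => ⟨hn, (hA.subset hn).2⟩⟩⟩
  | none =>
    obtain ⟨_, ⟨n, rfl⟩, hn⟩ := (almostCoveredByFinite_of_newMember_eq_none hx).exists_inter_finite
      (familyAt_pairwise hr _) (fun A hA => mem_familyAt.2 (Or.inl hA))
      (infinite_range_of_injective column_injective)
    refine ⟨column n, Or.inl ⟨n, rfl⟩, Or.inr ⟨column_inter_evens_infinite n, fun hfin =>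
      column_diff_evens_infinite n ((hn.union hfin).subset ?_)⟩⟩
    rintro m ⟨hm, hme⟩
    by_cases hmD : m ∈ D
    · exact Or.inr ⟨hm, hmD⟩
    · exact Or.inl ⟨hm, hme, hmD⟩

end Construction

lemma mk_requirement : Cardinal.mk Requirement = Cardinal.continuum := by
  simp [Requirement, Cardinal.mk_prod]

lemma continuum_eq_aleph_one (hCH : (2 : Cardinal.{u}) ^ Cardinal.aleph0 = Cardinal.aleph 1) :
    Cardinal.continuum.{0} = Cardinal.aleph 1 := by
  rw [← Cardinal.lift_inj.{0, u}, Cardinal.lift_continuum, ← Cardinal.two_power_aleph0, hCH,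
    Cardinal.lift_aleph, Ordinal.lift_one]

/-- Under CH there is a strongly ℵ₀-separated AD family whose Ψ-space is
not almost-normal. -/
theorem statement11 (hCH : (2 : Cardinal) ^ Cardinal.aleph0 = Cardinal.aleph 1) :
    ∃ 𝒜 : Set (Set ℕ), AlmostDisjointFam 𝒜 ∧ StronglyAleph0Separated 𝒜 ∧
      ¬ @AlmostNormalSp (ℕ ⊕ ↥𝒜) (psiTop 𝒜) := by
  obtain ⟨r, hwo, hr⟩ :=
    exists_wellOrder_countable_Iio (mk_requirement.trans (continuum_eq_aleph_one hCH))
  exact ⟨builtFamily r, builtFamily_almostDisjoint hr, builtFamily_stronglyAleph0Separated hr,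
    psiTop_not_almostNormal evens (builtFamily_defeats hr)⟩
end

section
/- Assuming the continuum hypothesis, there exist an almost disjoint family 𝒜 on ω and an infinite set W ⊆ ω such that: (i) 𝒜 is strongly ℵ₀-separated; and (ii) letting 𝒞 = {A ∈ 𝒜 : A ∩ W is infinite}, there is no set D ⊆ ω with A ⊆* D for every A ∈ 𝒜 \ 𝒞 and C ∩ D finite for every C ∈ 𝒞. -/
open Set

/-!
Under CH, enumerate all subsets of `ℕ` as `k i`, `i < ω₁`, and fix an infinite, coinfinite
`W`. Build a `⊆*`-decreasing tower `E i` of sets that meet both `W` and its complement in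
infinite sets. It survives countable limits: the finite intersections of a countable
`⊆*`-chain of such sets are again such sets, so a pseudo-intersection can be taken as the union
of one inside `W` and one outside `W`. Stage `i` carves two disjoint infinite sets out of
`E i`: `A i`, which meets `W` infinitely and meets `k i` infinitely whenever `E i` does, and
`B i ⊆ E i \ W`; the later stages lie almost inside `E i \ (A i ∪ B i)`.

No `D = k i` separates: either `A i ∩ D` is infinite although `A i` meets `W` infinitely, or
`B i ∩ D ⊆ E i ∩ D` is finite although `B i` misses `W`. For strong ℵ₀-separation, countably
many members have stage below some `δ`; every member of a later stage lies almost inside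
`E δ`, which meets every earlier member finitely, so a diagonal union that almost contains the
members to be covered and avoids the other earlier members and `E δ` is a partitioner.
-/

open Set

theorem Set.Infinite.exists_infinite_subset_infinite_diff {α : Type*} {X : Set α}
    (hX : X.Infinite) : ∃ Y ⊆ X, Y.Infinite ∧ (X \ Y).Infinite := by
  set f := hX.natEmbedding
  have hf : ∀ {a b : ℕ}, (f a : α) = f b → a = b := fun h => f.injective (Subtype.ext h)
  refine ⟨range fun n => (f (2 * n) : α), range_subset_iff.2 fun n => (f _).2,
    infinite_range_of_injective fun a b h => by simpa using hf h, ?_⟩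
  refine infinite_of_injective_forall_mem (f := fun n => (f (2 * n + 1) : α))
    (fun a b h => by simpa using hf h) fun n => ⟨(f _).2, ?_⟩
  rintro ⟨m, hm⟩
  have := hf hm
  omega

theorem Set.Infinite.exists_halving {α : Type*} {X : Set α} (hX : X.Infinite) (D : Set α) :
    ∃ Y ⊆ X, Y.Infinite ∧ (X \ Y).Infinite ∧ ((X ∩ D).Infinite → (Y ∩ D).Infinite) := by
  by_cases hXD : (X ∩ D).Infinite
  · obtain ⟨Y, hY, hYinf, hrest⟩ := hXD.exists_infinite_subset_infinite_diff
    refine ⟨Y, hY.trans inter_subset_left, hYinf,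
      hrest.mono (sdiff_subset_sdiff_left inter_subset_left), fun _ => ?_⟩
    rwa [inter_eq_left.2 (hY.trans inter_subset_right)]
  · obtain ⟨Y, hY, hYinf, hrest⟩ := hX.exists_infinite_subset_infinite_diff
    exact ⟨Y, hY, hYinf, hrest, fun h => absurd h hXD⟩

theorem AlmostSubset.refl (A : Set ℕ) : AlmostSubset A A := by
  simp [AlmostSubset]

theorem AlmostSubset.of_subset {A D : Set ℕ} (h : A ⊆ D) : AlmostSubset A D := by
  simp [AlmostSubset, sdiff_eq_empty.2 h]

theorem AlmostSubset.trans_subset {A D D' : Set ℕ} (h : AlmostSubset A D) (hD : D ⊆ D') :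
    AlmostSubset A D' :=
  h.subset (sdiff_subset_sdiff_right hD)

theorem AlmostSubset.union {A A' D : Set ℕ} (h : AlmostSubset A D) (h' : AlmostSubset A' D) :
    AlmostSubset (A ∪ A') D := by
  simpa [AlmostSubset, union_sdiff_distrib] using Set.Finite.union h h'

theorem AlmostSubset.biInter {ι : Type*} {A : Set ℕ} {F : ι → Set ℕ} {t : Set ι}
    (ht : t.Finite) (h : ∀ j ∈ t, AlmostSubset A (F j)) : AlmostSubset A (⋂ j ∈ t, F j) := by
  simpa [AlmostSubset, sdiff_iInter] using ht.biUnion h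

namespace AlmostDisjointTower

def Splits {α : Type*} (W X : Set α) : Prop := (X ∩ W).Infinite ∧ (X \ W).Infinite

theorem Splits.of_almostSubset {W X Y : Set ℕ} (hX : Splits W X) (h : AlmostSubset X Y) :
    Splits W Y := by
  refine ⟨(hX.1.sdiff h).mono ?_, (hX.2.sdiff h).mono ?_⟩ <;>
  · rintro x ⟨⟨hxX, hxW⟩, hxY⟩
    exact ⟨by_contra fun h => hxY ⟨hxX, h⟩, hxW⟩

structure IsStage {α : Type*} (W E D A B : Set α) : Prop where
  subset_left : A ⊆ E
  subset_right : B ⊆ E \ W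
  disjoint : Disjoint A B
  inter_infinite : (A ∩ W).Infinite
  infinite_right : B.Infinite
  inter_infinite_of_inter_infinite : (E ∩ D).Infinite → (A ∩ D).Infinite
  splits_rest : Splits W (E \ (A ∪ B))

theorem Splits.exists_isStage {α : Type*} {W E : Set α} (hE : Splits W E) (D : Set α) :
    ∃ A B, IsStage W E D A B := by
  obtain ⟨Y₀, hY₀, hY₀inf, hR₀, hD₀⟩ := hE.1.exists_halving D
  obtain ⟨Y₁, hY₁, -, hR₁, hD₁⟩ := hE.2.exists_halving D
  obtain ⟨B, hB, hBinf, hR⟩ := hR₁.exists_infinite_subset_infinite_diff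
  have hY₀W : Y₀ ⊆ W := hY₀.trans inter_subset_right
  have hBW : B ⊆ E \ W := hB.trans sdiff_subset
  refine ⟨Y₀ ∪ Y₁, B, ⟨union_subset (hY₀.trans inter_subset_left) (hY₁.trans sdiff_subset), hBW,
    ?_, ?_, hBinf, fun hED => ?_, ?_, ?_⟩⟩
  · exact disjoint_union_left.2 ⟨disjoint_left.2 fun x hx hxB => (hBW hxB).2 (hY₀W hx),
      disjoint_left.2 fun x hx hxB => (hB hxB).2 hx⟩
  · exact hY₀inf.mono fun x hx => ⟨Or.inl hx, hY₀W hx⟩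
  · have hsplit : E ∩ D ⊆ (E ∩ W) ∩ D ∪ (E \ W) ∩ D := fun x ⟨hxE, hxD⟩ => by
      by_cases hxW : x ∈ W
      exacts [Or.inl ⟨⟨hxE, hxW⟩, hxD⟩, Or.inr ⟨⟨hxE, hxW⟩, hxD⟩]
    rcases infinite_union.1 (hED.mono hsplit) with h | h
    · exact (hD₀ h).mono (inter_subset_inter_left _ subset_union_left)
    · exact (hD₁ h).mono (inter_subset_inter_left _ subset_union_right)
  · refine hR₀.mono ?_
    rintro x ⟨⟨hxE, hxW⟩, hxY₀⟩
    refine ⟨⟨hxE, ?_⟩, hxW⟩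
    rintro ((hx | hx) | hx)
    exacts [hxY₀ hx, (hY₁ hx).2 hxW, (hBW hx).2 hxW]
  · refine hR.mono ?_
    rintro x ⟨⟨⟨hxE, hxW⟩, hxY₁⟩, hxB⟩
    refine ⟨⟨hxE, ?_⟩, hxW⟩
    rintro ((hx | hx) | hx)
    exacts [hxW (hY₀W hx), hxY₁ hx, hxB hx]

theorem exists_infinite_almostSubset_of_antitone {G : ℕ → Set ℕ} (hG : Antitone G)
    (hinf : ∀ n, (G n).Infinite) : ∃ X ⊆ G 0, X.Infinite ∧ ∀ n, AlmostSubset X (G n) := by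
  choose x hxG hlt using fun n => (hinf n).exists_gt n
  refine ⟨range x, range_subset_iff.2 fun n => hG (Nat.zero_le n) (hxG n),
    infinite_of_not_bddAbove fun ⟨b, hb⟩ => (hlt b).not_ge (hb ⟨b, rfl⟩), fun m => ?_⟩
  refine ((finite_Iio m).image x).subset ?_
  rintro _ ⟨⟨n, rfl⟩, hn⟩
  exact ⟨n, lt_of_not_ge fun hmn => hn (hG hmn (hxG n)), rfl⟩

theorem exists_splits_almostSubset {ι : Type*} [Countable ι] {W : Set ℕ} {F : ι → Set ℕ}
    (hF : ∀ t : Set ι, t.Finite → Splits W (⋂ j ∈ t, F j)) :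
    ∃ X, Splits W X ∧ ∀ j, AlmostSubset X (F j) := by
  obtain ⟨e, he⟩ := exists_injective_nat ι
  set G : ℕ → Set ℕ := fun n => ⋂ j ∈ e ⁻¹' Iio n, F j
  have hG : Antitone G := fun m n hmn =>
    biInter_subset_biInter_left fun j (hj : e j < m) => (lt_of_lt_of_le hj hmn :)
  have hGW : ∀ n, Splits W (G n) := fun n => hF _ ((finite_Iio n).preimage he.injOn)
  obtain ⟨X₀, hX₀, hX₀inf, hX₀G⟩ := exists_infinite_almostSubset_of_antitone
    (fun m n hmn => inter_subset_inter_left W (hG hmn)) fun n => (hGW n).1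
  obtain ⟨X₁, hX₁, hX₁inf, hX₁G⟩ := exists_infinite_almostSubset_of_antitone
    (fun m n hmn => sdiff_subset_sdiff_left (hG hmn)) fun n => (hGW n).2
  have hGF : ∀ j, G (e j + 1) ⊆ F j := fun j => biInter_subset_of_mem (Nat.lt_succ_self (e j))
  refine ⟨X₀ ∪ X₁, ⟨hX₀inf.mono fun x hx => ⟨Or.inl hx, (hX₀ hx).2⟩,
    hX₁inf.mono fun x hx => ⟨Or.inr hx, (hX₁ hx).2⟩⟩, fun j => ?_⟩
  exact (AlmostSubset.trans_subset (hX₀G _) (inter_subset_left.trans (hGF j))).union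
    (AlmostSubset.trans_subset (hX₁G _) (sdiff_subset.trans (hGF j)))

theorem splits_biInter_of_chain {σ : Type*} [LinearOrder σ] {W : Set ℕ} (hW : Splits W univ)
    {F : σ → Set ℕ} {t : Set σ} (ht : t.Finite) (hsplit : ∀ j ∈ t, Splits W (F j))
    (hchain : ∀ j ∈ t, ∀ i ∈ t, j < i → AlmostSubset (F i) (F j)) :
    Splits W (⋂ j ∈ t, F j) := by
  rcases t.eq_empty_or_nonempty with rfl | hne
  · simpa using hW
  obtain ⟨M, hM, hmax⟩ := t.exists_max_image id ht hne
  refine (hsplit M hM).of_almostSubset (AlmostSubset.biInter ht fun j hj => ?_)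
  rcases (hmax j hj).lt_or_eq with h | rfl
  exacts [hchain j hj M hM h, AlmostSubset.refl _]

theorem exists_almostSubset_inter_finite_of_seq (f g : ℕ → Set ℕ)
    (h : ∀ n m, (f n ∩ g m).Finite) :
    ∃ D, (∀ n, AlmostSubset (f n) D) ∧ ∀ m, (g m ∩ D).Finite := by
  refine ⟨⋃ n, f n \ ⋃ m ≤ n, g m, fun n => ?_, fun m => ?_⟩
  · refine ((finite_le_nat n).biUnion fun m _ => h n m).subset ?_
    rintro x ⟨hx, hxD⟩
    have : x ∈ ⋃ m ≤ n, g m := by_contra fun hc => hxD (mem_iUnion.2 ⟨n, hx, hc⟩)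
    obtain ⟨m, hm, hxm⟩ := mem_iUnion₂.1 this
    exact mem_iUnion₂.2 ⟨m, hm, hx, hxm⟩
  · refine ((finite_lt_nat m).biUnion fun n _ => h n m).subset ?_
    rintro x ⟨hxg, hxD⟩
    obtain ⟨n, hxf, hxn⟩ := mem_iUnion.1 hxD
    have hnm : n < m := lt_of_not_ge fun hmn => hxn (mem_iUnion₂.2 ⟨m, hmn, hxg⟩)
    exact mem_iUnion₂.2 ⟨n, hnm, hxf, hxg⟩

theorem exists_almostSubset_inter_finite {ℬ 𝒢 : Set (Set ℕ)} (hℬ : ℬ.Countable)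
    (h𝒢 : 𝒢.Countable) (h : ∀ B ∈ ℬ, ∀ G ∈ 𝒢, (B ∩ G).Finite) :
    ∃ D, (∀ B ∈ ℬ, AlmostSubset B D) ∧ ∀ G ∈ 𝒢, (G ∩ D).Finite := by
  obtain ⟨f, hf⟩ := (hℬ.insert ∅).exists_eq_range (insert_nonempty _ _)
  obtain ⟨g, hg⟩ := (h𝒢.insert ∅).exists_eq_range (insert_nonempty _ _)
  have hfg : ∀ n m, (f n ∩ g m).Finite := by
    intro n m
    rcases (hf ▸ mem_range_self n : f n ∈ insert ∅ ℬ) with hn | hn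
    · simp [hn]
    rcases (hg ▸ mem_range_self m : g m ∈ insert ∅ 𝒢) with hm | hm
    · simp [hm]
    exact h _ hn _ hm
  obtain ⟨D, hfD, hgD⟩ := exists_almostSubset_inter_finite_of_seq f g hfg
  refine ⟨D, fun B hB => ?_, fun G hG => ?_⟩
  · obtain ⟨n, rfl⟩ : B ∈ range f := hf ▸ mem_insert_of_mem _ hB
    exact hfD n
  · obtain ⟨m, rfl⟩ : G ∈ range g := hg ▸ mem_insert_of_mem _ hG
    exact hgD m

theorem exists_gt_of_countable {σ : Type*} [LinearOrder σ] (hσ : ∀ i : σ, (Iio i).Countable)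
    (hunc : ¬ Countable σ) {S : Set σ} (hS : S.Countable) : ∃ δ, ∀ s ∈ S, s < δ := by
  by_contra! h
  refine hunc (countable_univ_iff.1 ((hS.biUnion fun s _ => ?_).mono
    fun δ _ => let ⟨s, hs, hδ⟩ := h δ; mem_biUnion hs (mem_Iic.2 hδ)))
  rw [← Iio_insert]
  exact (hσ s).insert s

noncomputable def stage (W E D : Set ℕ) : Set ℕ × Set ℕ :=
  Classical.epsilon fun p => IsStage W E D p.1 p.2

theorem isStage_stage {W E : Set ℕ} (hE : Splits W E) (D : Set ℕ) :
    IsStage W E D (stage W E D).1 (stage W E D).2 :=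
  let ⟨A, B, h⟩ := hE.exists_isStage D
  Classical.epsilon_spec (p := fun p : Set ℕ × Set ℕ => IsStage W E D p.1 p.2) ⟨(A, B), h⟩

def rest (W E D : Set ℕ) : Set ℕ := E \ ((stage W E D).1 ∪ (stage W E D).2)

section Tower

variable {σ : Type*} [LinearOrder σ]

structure IsTower (W : Set ℕ) (k E A B : σ → Set ℕ) : Prop where
  isStage : ∀ i, IsStage W (E i) (k i) (A i) (B i)
  almostSubset_rest : ∀ ⦃j i⦄, j < i → AlmostSubset (E i) (E j \ (A j ∪ B j))

variable [WellFoundedLT σ]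

noncomputable def tower (W : Set ℕ) (k : σ → Set ℕ) : σ → Set ℕ :=
  WellFoundedLT.fix fun i E => Classical.epsilon fun X =>
    Splits W X ∧ ∀ j (hj : j < i), AlmostSubset X (rest W (E j hj) (k j))

theorem tower_spec {W : Set ℕ} (hW : Splits W univ) (hσ : ∀ i : σ, (Iio i).Countable)
    (k : σ → Set ℕ) (i : σ) : Splits W (tower W k i) ∧
      ∀ j < i, AlmostSubset (tower W k i) (rest W (tower W k j) (k j)) := by
  induction i using WellFoundedLT.induction with
  | _ i ih =>
    rw [tower, WellFoundedLT.fix_eq]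
    refine Classical.epsilon_spec (p := fun X => Splits W X ∧ ∀ j (hj : j < i), _) ?_
    have : Countable (Iio i) := (hσ i).to_subtype
    obtain ⟨X, hX, hXrest⟩ :=
      exists_splits_almostSubset (F := fun j : Iio i => rest W (tower W k j) (k j))
        fun t ht => splits_biInter_of_chain hW ht
          (fun j _ => (isStage_stage (ih j j.2).1 _).splits_rest)
          fun j _ j' _ hjj' =>
            ((ih j' j'.2).2 j hjj').subset (sdiff_subset_sdiff_left sdiff_subset)
    exact ⟨X, hX, fun j hj => hXrest ⟨j, hj⟩⟩

theorem exists_isTower {W : Set ℕ} (hW : Splits W univ) (hσ : ∀ i : σ, (Iio i).Countable)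
    (k : σ → Set ℕ) : ∃ E A B : σ → Set ℕ, IsTower W k E A B :=
  ⟨tower W k, fun i => (stage W (tower W k i) (k i)).1,
    fun i => (stage W (tower W k i) (k i)).2,
    fun i => isStage_stage (tower_spec hW hσ k i).1 _,
    fun j i h => (tower_spec hW hσ k i).2 j h⟩

end Tower

def pairFamily {σ : Type*} (A B : σ → Set ℕ) : Set (Set ℕ) := ⋃ i, {A i, B i}

theorem exists_stage_lt_of_countable {σ : Type*} [LinearOrder σ] {A B : σ → Set ℕ}
    (hσ : ∀ i : σ, (Iio i).Countable) (hunc : ¬ Countable σ) {𝒮 : Set (Set ℕ)}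
    (h𝒮 : 𝒮.Countable) (hsub : 𝒮 ⊆ pairFamily A B) :
    ∃ δ, ∀ X ∈ 𝒮, ∃ i < δ, X ∈ ({A i, B i} : Set (Set ℕ)) := by
  have : Countable 𝒮 := h𝒮.to_subtype
  choose idx hidx using fun X : 𝒮 => mem_iUnion.1 (hsub X.2)
  obtain ⟨δ, hδ⟩ := exists_gt_of_countable hσ hunc (countable_range idx)
  exact ⟨δ, fun X hX => ⟨idx ⟨X, hX⟩, hδ _ (mem_range_self _), hidx _⟩⟩

namespace IsTower

variable {σ : Type*} [LinearOrder σ] {W : Set ℕ} {k E A B : σ → Set ℕ} {X : Set ℕ} {i j : σ}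

theorem subset_of_mem (hT : IsTower W k E A B) (hX : X ∈ ({A i, B i} : Set (Set ℕ))) :
    X ⊆ E i := by
  rcases hX with rfl | rfl
  exacts [(hT.isStage i).subset_left, (hT.isStage i).subset_right.trans sdiff_subset]

theorem infinite_of_mem (hT : IsTower W k E A B) (hX : X ∈ ({A i, B i} : Set (Set ℕ))) :
    X.Infinite := by
  rcases hX with rfl | rfl
  exacts [(hT.isStage i).inter_infinite.mono inter_subset_left, (hT.isStage i).infinite_right]

theorem inter_finite_of_lt (hT : IsTower W k E A B) (hX : X ∈ ({A j, B j} : Set (Set ℕ)))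
    (hji : j < i) : (X ∩ E i).Finite := by
  refine (hT.almostSubset_rest hji).subset fun x ⟨hxX, hxE⟩ => ⟨hxE, fun hx => hx.2 ?_⟩
  rcases hX with rfl | rfl
  exacts [Or.inl hxX, Or.inr hxX]

theorem almostSubset_of_le (hT : IsTower W k E A B) (hX : X ∈ ({A i, B i} : Set (Set ℕ)))
    (hji : j ≤ i) : AlmostSubset X (E j) := by
  rcases hji.lt_or_eq with h | rfl
  · exact ((hT.almostSubset_rest h).trans_subset sdiff_subset).subset
      (sdiff_subset_sdiff_left (hT.subset_of_mem hX))
  · exact AlmostSubset.of_subset (hT.subset_of_mem hX)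

theorem almostDisjointFam (hT : IsTower W k E A B) : AlmostDisjointFam (pairFamily A B) := by
  refine ⟨fun X hX => ?_, fun X hX Y hY hXY => ?_⟩
  · obtain ⟨i, hi⟩ := mem_iUnion.1 hX
    exact hT.infinite_of_mem hi
  obtain ⟨i, hi⟩ := mem_iUnion.1 hX
  obtain ⟨j, hj⟩ := mem_iUnion.1 hY
  rcases lt_trichotomy i j with h | rfl | h
  · exact (hT.inter_finite_of_lt hi h).subset (inter_subset_inter_right _ (hT.subset_of_mem hj))
  · have hAB := (hT.isStage i).disjoint.inter_eq
    rcases hi with rfl | rfl <;> rcases hj with rfl | rfl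
    · exact absurd rfl hXY
    · simp [hAB]
    · simp [inter_comm, hAB]
    · exact absurd rfl hXY
  · rw [inter_comm]
    exact (hT.inter_finite_of_lt hj h).subset (inter_subset_inter_right _ (hT.subset_of_mem hi))

theorem not_exists_separating (hT : IsTower W k E A B) (hk : Function.Surjective k) :
    ¬ ∃ D : Set ℕ, (∀ X ∈ pairFamily A B, (X ∩ W).Finite → AlmostSubset X D) ∧
      ∀ X ∈ pairFamily A B, (X ∩ W).Infinite → (X ∩ D).Finite := by
  rintro ⟨D, hcover, havoid⟩
  obtain ⟨i, rfl⟩ := hk D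
  have hS := hT.isStage i
  by_cases hED : (E i ∩ k i).Infinite
  · exact hS.inter_infinite_of_inter_infinite hED
      (havoid _ (mem_iUnion.2 ⟨i, Or.inl rfl⟩) hS.inter_infinite)
  have hBW : B i ∩ W = ∅ := disjoint_iff_inter_eq_empty.1
    (disjoint_sdiff_left.mono_left hS.subset_right)
  have hBD : AlmostSubset (B i) (k i) :=
    hcover _ (mem_iUnion.2 ⟨i, Or.inr rfl⟩) (hBW ▸ finite_empty)
  refine hS.infinite_right ?_
  rw [← sdiff_union_inter (B i) (k i)]
  exact Set.Finite.union hBD ((not_infinite.1 hED).subset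
    (inter_subset_inter_left _ (hS.subset_right.trans sdiff_subset)))

theorem stronglyAleph0Separated (hT : IsTower W k E A B) (hσ : ∀ i : σ, (Iio i).Countable)
    (hunc : ¬ Countable σ) : StronglyAleph0Separated (pairFamily A B) := by
  intro ℬ 𝒞 hℬ h𝒞 hℬc h𝒞c hdisj
  obtain ⟨δ, hδ⟩ := exists_stage_lt_of_countable hσ hunc (hℬc.union h𝒞c) (union_subset hℬ h𝒞)
  set 𝒢 : Set (Set ℕ) := insert (E δ) ((⋃ j ∈ Iio δ, {A j, B j}) \ ℬ)
  have h𝒢 : 𝒢.Countable :=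
    (((hσ δ).biUnion fun _ _ => (toFinite _).countable).mono sdiff_subset).insert _
  have hℬ𝒢 : ∀ X ∈ ℬ, ∀ G ∈ 𝒢, (X ∩ G).Finite := by
    rintro X hX G (rfl | ⟨hG, hGℬ⟩)
    · obtain ⟨j, hj, hXj⟩ := hδ X (Or.inl hX)
      exact hT.inter_finite_of_lt hXj hj
    · obtain ⟨j, -, hGj⟩ := mem_iUnion₂.1 hG
      exact hT.almostDisjointFam.2 X (hℬ hX) G (mem_iUnion.2 ⟨j, hGj⟩) fun h => hGℬ (h ▸ hX)
  obtain ⟨D, hℬD, h𝒢D⟩ := exists_almostSubset_inter_finite hℬc h𝒢 hℬ𝒢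
  refine ⟨D, fun X hX => ?_, hℬD, fun C hC => h𝒢D C ?_⟩
  · obtain ⟨i, hi⟩ := mem_iUnion.1 hX
    by_cases hXℬ : X ∈ ℬ
    · exact Or.inl (hℬD X hXℬ)
    rcases lt_or_ge i δ with h | h
    · exact Or.inr (h𝒢D X (Or.inr ⟨mem_biUnion h hi, hXℬ⟩))
    · refine Or.inr ((Set.Finite.union (hT.almostSubset_of_le hi h)
        (h𝒢D _ (mem_insert _ _))).subset fun x ⟨hxX, hxD⟩ => ?_)
      by_cases hxE : x ∈ E δ
      exacts [Or.inr ⟨hxE, hxD⟩, Or.inl ⟨hxX, hxE⟩]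
  · obtain ⟨j, hj, hCj⟩ := hδ C (Or.inr hC)
    exact Or.inr ⟨mem_biUnion hj hCj, fun hCℬ => disjoint_left.1 hdisj hCℬ hC⟩

end IsTower

theorem splits_even_univ : Splits {n : ℕ | Even n} univ := by
  refine ⟨infinite_of_forall_exists_gt fun a => ?_, infinite_of_forall_exists_gt fun a => ?_⟩
  exacts [⟨2 * a + 2, ⟨trivial, a + 1, by ring⟩, by omega⟩,
    ⟨2 * a + 1, ⟨trivial, Nat.not_even_two_mul_add_one a⟩, by omega⟩]

open Cardinal

theorem countable_Iio_toType_aleph_one (i : (ℵ₁ : Cardinal.{0}).ord.ToType) : (Iio i).Countable :=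
  le_aleph0_iff_set_countable.1 (lt_aleph_one_iff.1 (by simpa using mk_Iio_lt i (by simp)))

theorem not_countable_toType_aleph_one : ¬ Countable (ℵ₁ : Cardinal.{0}).ord.ToType := by
  rw [← mk_le_aleph0_iff, mk_toType, card_ord, not_le]
  exact aleph0_lt_aleph_one

theorem mk_set_nat_eq_aleph_one (hCH : (2 : Cardinal.{u}) ^ ℵ₀ = ℵ₁) : #(Set ℕ) = ℵ₁ := by
  refine lift_injective.{u, 0} ?_
  simpa using hCH

end AlmostDisjointTower

/-- Under CH there are a strongly ℵ₀-separated AD family `𝒜` and an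
infinite `W ⊆ ω` such that, with `𝒞 = {A ∈ 𝒜 : A ∩ W infinite}`, no `D ⊆ ω` almost
contains every member of `𝒜 \ 𝒞` while being almost disjoint from every member of `𝒞`. -/
theorem statement12 (hCH : (2 : Cardinal) ^ Cardinal.aleph0 = Cardinal.aleph 1) :
    ∃ (𝒜 : Set (Set ℕ)) (W : Set ℕ), AlmostDisjointFam 𝒜 ∧ W.Infinite ∧
      StronglyAleph0Separated 𝒜 ∧
      ¬ ∃ D : Set ℕ, (∀ A ∈ 𝒜, (A ∩ W).Finite → AlmostSubset A D) ∧
        ∀ A ∈ 𝒜, (A ∩ W).Infinite → (A ∩ D).Finite := by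
  obtain ⟨e⟩ : Nonempty ((Cardinal.aleph 1 : Cardinal.{0}).ord.ToType ≃ Set ℕ) := by
    rw [← Cardinal.eq, Cardinal.mk_toType, Cardinal.card_ord,
      AlmostDisjointTower.mk_set_nat_eq_aleph_one hCH]
  obtain ⟨E, A, B, hT⟩ := AlmostDisjointTower.exists_isTower
    AlmostDisjointTower.splits_even_univ AlmostDisjointTower.countable_Iio_toType_aleph_one e
  exact ⟨_, _, hT.almostDisjointFam, by simpa using AlmostDisjointTower.splits_even_univ.1,
    hT.stronglyAleph0Separated AlmostDisjointTower.countable_Iio_toType_aleph_one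
      AlmostDisjointTower.not_countable_toType_aleph_one,
    hT.not_exists_separating e.surjective⟩
end
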